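/- arXiv:1511.05775 — 8 statements merged into one kernel-verified Lean document; each statement's English description precedes it below -/
import Mathlib

section
/- Let n ≥ 1 and let A be an m × n matrix of symbols in which the entries of each row are pairwise distinct. If m ≥ 2n − 1, then A has a full transversal, i.e., there exist n entries of A, no two in the same row, no two in the same column, and no two equal as symbols. Formally: if S is a type, A : Fin m → Fin n → S satisfies that A i is injective for every row index i, and m ≥ 2n − 1, then there exist an injective map r : Fin n → Fin m and a bijection c : Fin n → Fin n such that the map j ↦ A (r j) (c j) is injective. -/
private lemma fin_snoc_injective {α : Type*} {k : ℕ} {f : Fin k → α} {z : α}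
    (hf : Function.Injective f) (hz : ∀ i, f i ≠ z) :
    Function.Injective (Fin.snoc f z : Fin (k + 1) → α) := by
  intro i j h
  induction i using Fin.lastCases with
  | last =>
    induction j using Fin.lastCases with
    | last => rfl
    | cast j =>
      rw [Fin.snoc_last, Fin.snoc_castSucc] at h
      exact absurd h.symm (hz j)
  | cast i =>
    induction j using Fin.lastCases with
    | last =>
      rw [Fin.snoc_castSucc, Fin.snoc_last] at h
      exact absurd h (hz i)
    | cast j =>
      rw [Fin.snoc_castSucc, Fin.snoc_castSucc] at h
      exact congrArg Fin.castSucc (hf h)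

private lemma drisko_step {S : Type*} {m n k : ℕ} (hk : k < n) (hm : 2 * n - 1 ≤ m)
    (A : Fin m → Fin n → S) (hrow : ∀ i : Fin m, Function.Injective (A i))
    (prev : ∃ (ρ : Fin k → Fin m) (ξ : Fin k → Fin n),
      Function.Injective ρ ∧ Function.Injective ξ ∧
        Function.Injective (fun i : Fin k => A (ρ i) (ξ i))) :
    ∃ (ρ : Fin (k+1) → Fin m) (ξ : Fin (k+1) → Fin n),
      Function.Injective ρ ∧ Function.Injective ξ ∧
        Function.Injective (fun i : Fin (k+1) => A (ρ i) (ξ i)) := by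
  classical
  obtain ⟨ρ, ξ, hρ, hξ, hY⟩ := prev
  set Y : Fin k → S := fun i => A (ρ i) (ξ i) with hYdef
  -- "forests" rooted at the free columns
  set P : ℕ → Prop := fun a =>
    ∃ (o : Fin a → Fin k) (w : Fin a → Fin m) (q : Fin a → Fin n),
      Function.Injective o ∧ Function.Injective w ∧ (∀ i, w i ∉ Set.range ρ) ∧
      (∀ i, q i ∉ Set.range ξ ∨ ∃ j, j < i ∧ ξ (o j) = q i) ∧
      (∀ i, A (w i) (q i) = Y (o i)) with hPdef
  have hP0 : P 0 := ⟨Fin.elim0, Fin.elim0, Fin.elim0, fun i => i.elim0, fun i => i.elim0,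
    fun i => i.elim0, fun i => i.elim0, fun i => i.elim0⟩
  have haP : P (Nat.findGreatest P k) := Nat.findGreatest_spec (Nat.zero_le k) hP0
  set a := Nat.findGreatest P k with hadef
  have hak : a ≤ k := Nat.findGreatest_le k
  obtain ⟨o, w, q, ho, hw, hwρ, hq, hwit⟩ := haP
  -- there is always an unused row
  have havail : ∃ M : Fin m, M ∉ Set.range ρ ∧ M ∉ Set.range w := by
    have hcard : ((Finset.univ.image ρ) ∪ (Finset.univ.image w)).card < m := by
      have h1 : (Finset.univ.image ρ).card ≤ k := by
        refine le_trans Finset.card_image_le ?_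
        simp
      have h2 : (Finset.univ.image w).card ≤ a := by
        refine le_trans Finset.card_image_le ?_
        simp
      have h3 := Finset.card_union_le (Finset.univ.image ρ) (Finset.univ.image w)
      omega
    by_contra hno
    push_neg at hno
    have hall : ∀ M : Fin m, M ∈ (Finset.univ.image ρ) ∪ (Finset.univ.image w) := by
      intro M
      rcases Classical.em (M ∈ Set.range ρ) with h | h
      · obtain ⟨i, hi⟩ := h
        exact Finset.mem_union_left _ (Finset.mem_image.mpr ⟨i, Finset.mem_univ i, hi⟩)
      · obtain ⟨i, hi⟩ := hno M h
        exact Finset.mem_union_right _ (Finset.mem_image.mpr ⟨i, Finset.mem_univ i, hi⟩)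
    have := Finset.eq_univ_iff_forall.mpr hall
    rw [this, Finset.card_univ, Fintype.card_fin] at hcard
    exact lt_irrefl _ hcard
  by_cases hwin : ∃ (M : Fin m) (x : Fin n),
      (M ∉ Set.range ρ ∧ M ∉ Set.range w) ∧
      (x ∉ Set.range ξ ∨ ∃ j, ξ (o j) = x) ∧ (∀ i, A M x ≠ Y i)
  · -- a row with a brand-new symbol at a reachable column: augment
    obtain ⟨M, x, ⟨hMρ, hMw⟩, hxW, hs⟩ := hwin
    rcases hxW with hxfree | ⟨j₀, hj₀⟩
    · -- the column itself is free: extend directly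
      refine ⟨Fin.snoc ρ M, Fin.snoc ξ x,
        fin_snoc_injective hρ (fun i he => hMρ ⟨i, he⟩),
        fin_snoc_injective hξ (fun i he => hxfree ⟨i, he⟩), ?_⟩
      have hσ : (fun i : Fin (k+1) => A ((Fin.snoc ρ M : Fin (k+1) → Fin m) i)
            ((Fin.snoc ξ x : Fin (k+1) → Fin n) i)) = Fin.snoc Y (A M x) := by
        funext i
        induction i using Fin.lastCases with
        | last => simp only [Fin.snoc_last]
        | cast i => simp only [Fin.snoc_castSucc, hYdef]
      rw [hσ]
      exact fin_snoc_injective hY (fun i he => hs i he.symm)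
    · -- the column is in the forest: follow the path down to a free column
      have hpath : ∀ v : ℕ, ∀ j : Fin a, (j : ℕ) ≤ v →
          ∃ (r : ℕ) (js : ℕ → Fin a), js 0 = j ∧ (∀ t, t < r → js (t+1) < js t) ∧
            (∀ t, t < r → ξ (o (js (t+1))) = q (js t)) ∧ q (js r) ∉ Set.range ξ := by
        intro v
        induction v with
        | zero =>
          intro j hj
          rcases hq j with hfree | ⟨j', hlt, he⟩
          · exact ⟨0, fun _ => j, rfl, fun t ht => absurd ht (Nat.not_lt_zero t),
              fun t ht => absurd ht (Nat.not_lt_zero t), hfree⟩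
          · exact absurd (Fin.lt_def.mp hlt) (by omega)
        | succ v ih =>
          intro j hj
          rcases hq j with hfree | ⟨j', hlt, he⟩
          · exact ⟨0, fun _ => j, rfl, fun t ht => absurd ht (Nat.not_lt_zero t),
              fun t ht => absurd ht (Nat.not_lt_zero t), hfree⟩
          · obtain ⟨r, js, h0, hd, hl, hlast⟩ := ih j' (by
              have := Fin.lt_def.mp hlt; omega)
            refine ⟨r + 1, fun t => Nat.casesOn t j (fun t' => js t'), rfl, ?_, ?_, ?_⟩
            · intro t ht
              cases t with
              | zero => show js 0 < j; rw [h0]; exact hlt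
              | succ t => exact hd t (by omega)
            · intro t ht
              cases t with
              | zero => show ξ (o (js 0)) = q j; rw [h0]; exact he
              | succ t => exact hl t (by omega)
            · exact hlast
      obtain ⟨r, js, hjs0, hdesc, hlink, hend⟩ := hpath (j₀ : ℕ) j₀ le_rfl
      have hlt2 : ∀ t t' : ℕ, t < t' → t' ≤ r → js t' < js t := by
        intro t t' h h'
        induction t' with
        | zero => omega
        | succ t'' ih =>
          rcases Nat.lt_succ_iff_lt_or_eq.mp h with h1 | h1
          · exact lt_trans (hdesc t'' (by omega)) (ih h1 (by omega))
          · subst h1; exact hdesc t (by omega)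
      have hjsinj : ∀ t t' : ℕ, t ≤ r → t' ≤ r → js t = js t' → t = t' := by
        intro t t' h h' he
        rcases lt_trichotomy t t' with h1 | h1 | h1
        · exact absurd (hlt2 t t' h1 h') (by rw [he]; exact lt_irrefl _)
        · exact h1
        · exact absurd (hlt2 t' t h1 h) (by rw [he]; exact lt_irrefl _)
      set Ppred : Fin k → Prop := fun i => ∃ t, t ≤ r ∧ o (js t) = i with hPpred
      set ρin : Fin k → Fin m := fun i => if h : Ppred i then w (js h.choose) else ρ i with hρin
      set ξin : Fin k → Fin n := fun i => if h : Ppred i then q (js h.choose) else ξ i with hξin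
      have hcases : ∀ i : Fin k,
          (∃ t, t ≤ r ∧ i = o (js t) ∧ ρin i = w (js t) ∧ ξin i = q (js t)) ∨
          (¬ Ppred i ∧ ρin i = ρ i ∧ ξin i = ξ i) := by
        intro i
        by_cases h : Ppred i
        · left
          exact ⟨h.choose, h.choose_spec.1, h.choose_spec.2.symm,
            by simp only [hρin, dif_pos h], by simp only [hξin, dif_pos h]⟩
        · right
          exact ⟨h, by simp only [hρin, dif_neg h], by simp only [hξin, dif_neg h]⟩
      have hρin_inj : Function.Injective ρin := by
        intro i i' he
        rcases hcases i with ⟨t, ht, hi, hei, -⟩ | ⟨hnp, hei, -⟩ <;>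
          rcases hcases i' with ⟨t', ht', hi', hei', -⟩ | ⟨hnp', hei', -⟩
        · rw [hei, hei'] at he
          have : t = t' := hjsinj t t' ht ht' (hw he)
          rw [hi, hi', this]
        · rw [hei, hei'] at he
          exact absurd ⟨i', he.symm⟩ (hwρ (js t))
        · rw [hei, hei'] at he
          exact absurd ⟨i, he⟩ (hwρ (js t'))
        · rw [hei, hei'] at he
          exact hρ he
      have hρlast : ∀ i, ρin i ≠ M := by
        intro i
        rcases hcases i with ⟨t, ht, hi, hei, -⟩ | ⟨hnp, hei, -⟩
        · rw [hei]; exact fun he => hMw ⟨js t, he⟩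
        · rw [hei]; exact fun he => hMρ ⟨i, he⟩
      have hξin_inj : Function.Injective ξin := by
        intro i i' he
        rcases hcases i with ⟨t, ht, hi, -, hei⟩ | ⟨hnp, -, hei⟩ <;>
          rcases hcases i' with ⟨t', ht', hi', -, hei'⟩ | ⟨hnp', -, hei'⟩
        · rw [hei, hei'] at he
          have htr : t < r ∨ t = r := by omega
          have htr' : t' < r ∨ t' = r := by omega
          rcases htr with htr | htr <;> rcases htr' with htr' | htr'
          · rw [← hlink t htr, ← hlink t' htr'] at he
            have h1 : (t+1) = (t'+1) := hjsinj _ _ (by omega) (by omega) (ho (hξ he))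
            have h2 : t = t' := by omega
            rw [hi, hi', h2]
          · subst htr'
            rw [← hlink t htr] at he
            exact absurd ⟨_, he⟩ hend
          · subst htr
            rw [← hlink t' htr'] at he
            exact absurd ⟨_, he.symm⟩ hend
          · rw [hi, hi', htr, htr']
        · rw [hei, hei'] at he
          have htr : t < r ∨ t = r := by omega
          rcases htr with htr | htr
          · rw [← hlink t htr] at he
            exact absurd ⟨t + 1, by omega, hξ he⟩ hnp'
          · subst htr
            exact absurd ⟨i', he.symm⟩ hend
        · rw [hei, hei'] at he
          have htr : t' < r ∨ t' = r := by omega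
          rcases htr with htr | htr
          · rw [← hlink t' htr] at he
            exact absurd ⟨t' + 1, by omega, hξ he.symm⟩ hnp
          · subst htr
            exact absurd ⟨i, he⟩ hend
        · rw [hei, hei'] at he
          exact hξ he
      have hξlast : ∀ i, ξin i ≠ ξ (o (js 0)) := by
        intro i
        rcases hcases i with ⟨t, ht, hi, -, hei⟩ | ⟨hnp, -, hei⟩
        · rw [hei]
          intro he
          have htr : t < r ∨ t = r := by omega
          rcases htr with htr | htr
          · rw [← hlink t htr] at he
            have : (t+1) = 0 := hjsinj _ _ (by omega) (by omega) (ho (hξ he))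
            omega
          · subst htr
            exact hend ⟨_, he.symm⟩
        · rw [hei]
          intro he
          exact hnp ⟨0, Nat.zero_le r, (hξ he).symm⟩
      refine ⟨Fin.snoc ρin M, Fin.snoc ξin (ξ (o (js 0))),
        fin_snoc_injective hρin_inj hρlast,
        fin_snoc_injective hξin_inj hξlast, ?_⟩
      have hσ : (fun i : Fin (k+1) => A ((Fin.snoc ρin M : Fin (k+1) → Fin m) i)
            ((Fin.snoc ξin (ξ (o (js 0))) : Fin (k+1) → Fin n) i)) = Fin.snoc Y (A M x) := by
        funext i
        induction i using Fin.lastCases with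
        | last =>
          simp only [Fin.snoc_last]
          rw [hjs0, hj₀]
        | cast i =>
          simp only [Fin.snoc_castSucc]
          rcases hcases i with ⟨t, ht, hi, hei, hei'⟩ | ⟨hnp, hei, hei'⟩
          · rw [hei, hei', hwit (js t), hi]
          · rw [hei, hei', hYdef]
      rw [hσ]
      exact fin_snoc_injective hY (fun i he => hs i he.symm)
  · -- no winning move: the forest is maximal and we derive a contradiction
    exfalso
    push_neg at hwin
    by_cases hext : ∃ (M : Fin m) (x : Fin n) (i : Fin k),
        (M ∉ Set.range ρ ∧ M ∉ Set.range w) ∧ (x ∉ Set.range ξ ∨ ∃ j, ξ (o j) = x) ∧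
        A M x = Y i ∧ i ∉ Set.range o
    · -- the forest can be extended, contradicting maximality
      obtain ⟨M, x, i₀, ⟨hMρ, hMw⟩, hxW, hYi, hio⟩ := hext
      have ho' : Function.Injective (Fin.snoc o i₀ : Fin (a+1) → Fin k) :=
        fin_snoc_injective ho (fun t he => hio ⟨t, he⟩)
      have hPsucc : P (a + 1) := by
        refine ⟨Fin.snoc o i₀, Fin.snoc w M, Fin.snoc q x, ho',
          fin_snoc_injective hw (fun t he => hMw ⟨t, he⟩), ?_, ?_, ?_⟩
        · intro i
          induction i using Fin.lastCases with
          | last => simpa only [Fin.snoc_last] using hMρ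
          | cast i => simpa only [Fin.snoc_castSucc] using hwρ i
        · intro i
          induction i using Fin.lastCases with
          | last =>
            simp only [Fin.snoc_last]
            rcases hxW with h | ⟨j, hj⟩
            · exact Or.inl h
            · refine Or.inr ⟨Fin.castSucc j, Fin.castSucc_lt_last j, ?_⟩
              rw [Fin.snoc_castSucc]; exact hj
          | cast i =>
            simp only [Fin.snoc_castSucc]
            rcases hq i with h | ⟨j, hj, he⟩
            · exact Or.inl h
            · refine Or.inr ⟨Fin.castSucc j, ?_, ?_⟩
              · rwa [Fin.castSucc_lt_castSucc_iff]
              · rw [Fin.snoc_castSucc]; exact he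
        · intro i
          induction i using Fin.lastCases with
          | last => simp only [Fin.snoc_last]; exact hYi
          | cast i => simp only [Fin.snoc_castSucc]; exact hwit i
      have hcard : a + 1 ≤ k := by
        have := Fintype.card_le_of_injective _ ho'
        simpa using this
      exact Nat.findGreatest_is_greatest (by omega) hcard hPsucc
    · -- the forest is closed: counting contradiction
      push_neg at hext
      obtain ⟨M₀, hM₀ρ, hM₀w⟩ := havail
      have hclosed : ∀ x : Fin n, (x ∉ Set.range ξ ∨ ∃ j, ξ (o j) = x) →
          ∃ j : Fin a, A M₀ x = Y (o j) := by
        intro x hx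
        obtain ⟨i, hi⟩ := hwin M₀ x ⟨hM₀ρ, hM₀w⟩ hx
        obtain ⟨j, rfl⟩ := hext M₀ x i ⟨hM₀ρ, hM₀w⟩ hx hi
        exact ⟨j, hi⟩
      set Wf : Finset (Fin n) :=
        (Finset.univ \ Finset.univ.image ξ) ∪ Finset.univ.image (fun j : Fin a => ξ (o j))
        with hWfdef
      have hWmem : ∀ x ∈ Wf, x ∉ Set.range ξ ∨ ∃ j, ξ (o j) = x := by
        intro x hx
        rw [hWfdef, Finset.mem_union] at hx
        rcases hx with h | h
        · rw [Finset.mem_sdiff] at h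
          left
          rintro ⟨i, hi⟩
          exact h.2 (Finset.mem_image.mpr ⟨i, Finset.mem_univ i, hi⟩)
        · right
          obtain ⟨j, -, hj⟩ := Finset.mem_image.mp h
          exact ⟨j, hj⟩
      have hcard1 : (Finset.univ \ Finset.univ.image ξ).card = n - k := by
        rw [Finset.card_sdiff_of_subset (Finset.subset_univ _), Finset.card_univ, Fintype.card_fin,
          Finset.card_image_of_injective _ hξ, Finset.card_univ, Fintype.card_fin]
      have hcard2 : (Finset.univ.image (fun j : Fin a => ξ (o j))).card = a := by
        have hinj : Function.Injective (fun j : Fin a => ξ (o j)) := fun x y h => ho (hξ h)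
        rw [Finset.card_image_of_injective _ hinj, Finset.card_univ, Fintype.card_fin]
      have hdisj : Disjoint (Finset.univ \ Finset.univ.image ξ)
          (Finset.univ.image (fun j : Fin a => ξ (o j))) := by
        refine Finset.disjoint_left.mpr ?_
        intro x hx hx'
        rw [Finset.mem_sdiff] at hx
        obtain ⟨j, -, hj⟩ := Finset.mem_image.mp hx'
        exact hx.2 (Finset.mem_image.mpr ⟨o j, Finset.mem_univ _, hj⟩)
      have hWfcard : Wf.card = (n - k) + a := by
        rw [hWfdef, Finset.card_union_of_disjoint hdisj, hcard1, hcard2]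
      have hWfpos : 0 < Wf.card := by rw [hWfcard]; omega
      obtain ⟨x₀, hx₀⟩ := Finset.card_pos.mp hWfpos
      obtain ⟨j₀, -⟩ := hclosed x₀ (hWmem x₀ hx₀)
      have hle : Wf.card ≤ (Finset.univ : Finset (Fin a)).card := by
        refine Finset.card_le_card_of_injOn
          (fun x => if h : ∃ j : Fin a, A M₀ x = Y (o j) then h.choose else j₀)
          (fun x _ => Finset.mem_univ _) ?_
        intro x hx x' hx' he
        have h1 := hclosed x (hWmem x hx)
        have h2 := hclosed x' (hWmem x' hx')
        simp only at he
        rw [dif_pos h1, dif_pos h2] at he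
        have e1 : A M₀ x = Y (o h1.choose) := h1.choose_spec
        have e2 : A M₀ x' = Y (o h2.choose) := h2.choose_spec
        exact hrow M₀ (by rw [e1, e2, he])
      rw [Finset.card_univ, Fintype.card_fin, hWfcard] at hle
      omega

/-- **Drisko's theorem, matrix form.** If `A` is an `m × n` matrix of symbols in which the
entries of each row are pairwise distinct, `n ≥ 1` and `m ≥ 2n - 1`, then `A` has a full
transversal: `n` entries, no two in the same row, no two in the same column, no two equal. -/
theorem drisko_matrix {S : Type*} {m n : ℕ} (hn : 1 ≤ n) (hm : 2 * n - 1 ≤ m)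
    (A : Fin m → Fin n → S) (hrow : ∀ i : Fin m, Function.Injective (A i)) :
    ∃ (r : Fin n → Fin m) (c : Fin n ≃ Fin n),
      Function.Injective r ∧ Function.Injective (fun j : Fin n => A (r j) (c j)) := by
  classical
  have main : ∀ K : ℕ, K ≤ n → ∃ (ρ : Fin K → Fin m) (ξ : Fin K → Fin n),
      Function.Injective ρ ∧ Function.Injective ξ ∧
        Function.Injective (fun i : Fin K => A (ρ i) (ξ i)) := by
    intro K
    induction K with
    | zero =>
      exact fun _ => ⟨Fin.elim0, Fin.elim0, fun i => i.elim0, fun i => i.elim0,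
        fun i => i.elim0⟩
    | succ K ih =>
      intro hK
      exact drisko_step (by omega) hm A hrow (ih (by omega))
  obtain ⟨ρ, ξ, hρ, hξ, hY⟩ := main n le_rfl
  have hbij : Function.Bijective ξ := (Finite.injective_iff_bijective).mp hξ
  let e : Fin n ≃ Fin n := Equiv.ofBijective ξ hbij
  refine ⟨fun j => ρ (e.symm j), Equiv.refl (Fin n), hρ.comp e.symm.injective, ?_⟩
  intro j j' h
  simp only [Equiv.refl_apply] at h
  have h1 : ξ (e.symm j) = j := e.apply_symm_apply j
  have h2 : ξ (e.symm j') = j' := e.apply_symm_apply j'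
  have h3 : A (ρ (e.symm j)) (ξ (e.symm j)) = A (ρ (e.symm j')) (ξ (e.symm j')) := by
    rw [h1, h2]; exact h
  have h4 := hY h3
  calc j = ξ (e.symm j) := h1.symm
    _ = ξ (e.symm j') := by rw [h4]
    _ = j' := h2
end

section
/- Any family M_1, …, M_{2n−1} of matchings of size n in a bipartite graph possesses a rainbow matching of size n. Formally: if A and B are types and M : Fin (2n−1) → Finset (A × B) is such that each M i is a matching of size n, then there exists a rainbow matching of size n for the family M. -/
/-- A matching in a bipartite graph with sides `A` and `B`: a set of edges (pairs in `A × B`)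
such that no two edges share a first or a second coordinate. -/
def IsMatching {A B : Type*} (M : Finset (A × B)) : Prop :=
  (∀ e ∈ M, ∀ f ∈ M, e.1 = f.1 → e = f) ∧ (∀ e ∈ M, ∀ f ∈ M, e.2 = f.2 → e = f)

/-- A family `M` of matchings has a rainbow matching of size `k` if there are `k` edges,
no two sharing a first or second coordinate, and `k` distinct indices such that the `j`-th
edge belongs to the matching with the `j`-th index. -/
def HasRainbowMatching {A B : Type*} {m : ℕ} (M : Fin m → Finset (A × B)) (k : ℕ) : Prop :=
  ∃ (e : Fin k → A × B) (idx : Fin k → Fin m),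
    Function.Injective idx ∧
    Function.Injective (fun j => (e j).1) ∧
    Function.Injective (fun j => (e j).2) ∧
    ∀ j, e j ∈ M (idx j)

/-!
A rainbow matching `P` of size `k < n` can be enlarged when there are at least `2k + 1`
matchings. Suppose not. We release the edges of `P` one by one: an edge `d` is released once
some re-routing `W` of `P` (a rainbow matching of size `k` with the same `B`-endpoints, agreeing
with `P` off the released edges) leaves the `A`-endpoint of `d` uncovered. With `j ≤ k` edges
released and at most `j` extra indices spent, some index `u` is still fresh, and since `M u`
has more than `k` edges, one of them, `e`, avoids the `k - j` unreleased `A`-endpoints and the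
`j` released `B`-endpoints. So either `e.1` is not covered by `P` or it is the `A`-endpoint of a
released edge; either way some re-routing leaves `e.1` uncovered. If `e.2` is not a
`B`-endpoint of `P`, adding `e` to it enlarges `P`; otherwise `e.2` is the `B`-endpoint of an
unreleased edge `p`, and exchanging `p` for `e` releases `p`. After `k + 1` rounds more than
`k` edges of `P` are released, which is absurd.
-/

section

open Finset

variable {A B ι : Type*}

lemma Finset.image_insert_erase_of_eq {α β : Type*} [DecidableEq α] [DecidableEq β] {f : α → β}
    {s : Finset α} {a x : α} (ha : a ∈ s) (h : f x = f a) :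
    (insert x (s.erase a)).image f = s.image f := by
  rw [image_insert, h, ← image_insert, insert_erase ha]

lemma Set.InjOn.notMem_image_erase {α β : Type*} [DecidableEq α] [DecidableEq β] {f : α → β}
    {s : Finset α} {a : α} (hf : Set.InjOn f (s : Set α)) (ha : a ∈ s) :
    f a ∉ (s.erase a).image f := by
  simp only [Finset.mem_image, mem_erase, not_exists, not_and]
  exact fun b ⟨hba, hb⟩ hfb => hba (hf hb ha hfb)

namespace IsMatching

variable {M : Finset (A × B)}

lemma injOn_fst (hM : IsMatching M) : Set.InjOn Prod.fst (M : Set (A × B)) :=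
  fun e he f hf h => hM.1 e he f hf h

lemma injOn_snd (hM : IsMatching M) : Set.InjOn Prod.snd (M : Set (A × B)) :=
  fun e he f hf h => hM.2 e he f hf h

lemma exists_mem_notMem_notMem [DecidableEq A] [DecidableEq B] (hM : IsMatching M)
    (S : Finset A) (T : Finset B) (hcard : S.card + T.card < M.card) :
    ∃ e ∈ M, e.1 ∉ S ∧ e.2 ∉ T := by
  by_contra! hcover
  have hsub : M ⊆ M.filter (·.1 ∈ S) ∪ M.filter (·.2 ∈ T) := by
    intro e he
    by_cases heS : e.1 ∈ S
    · exact mem_union_left _ (mem_filter.2 ⟨he, heS⟩)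
    · exact mem_union_right _ (mem_filter.2 ⟨he, hcover e he heS⟩)
  have hS : (M.filter (·.1 ∈ S)).card ≤ S.card :=
    card_le_card_of_injOn Prod.fst (fun e he => (mem_filter.1 he).2)
      (hM.injOn_fst.mono (coe_subset.2 (filter_subset _ _)))
  have hT : (M.filter (·.2 ∈ T)).card ≤ T.card :=
    card_le_card_of_injOn Prod.snd (fun e he => (mem_filter.1 he).2)
      (hM.injOn_snd.mono (coe_subset.2 (filter_subset _ _)))
  have := (card_le_card hsub).trans (card_union_le _ _)
  omega

end IsMatching

/-- A rainbow matching, recorded as a set of edges each tagged with the index of a matching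
containing it. -/
structure IsRainbow (M : ι → Finset (A × B)) (P : Finset ((A × B) × ι)) : Prop where
  injOn_left : Set.InjOn (fun p => p.1.1) (P : Set ((A × B) × ι))
  injOn_right : Set.InjOn (fun p => p.1.2) (P : Set ((A × B) × ι))
  injOn_index : Set.InjOn Prod.snd (P : Set ((A × B) × ι))
  mem : ∀ p ∈ P, p.1 ∈ M p.2

namespace IsRainbow

variable {M : ι → Finset (A × B)} {P W : Finset ((A × B) × ι)}

lemma mono (hW : IsRainbow M W) (hPW : P ⊆ W) : IsRainbow M P :=
  ⟨hW.injOn_left.mono hPW, hW.injOn_right.mono hPW, hW.injOn_index.mono hPW,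
    fun p hp => hW.mem p (hPW hp)⟩

lemma insert [DecidableEq A] [DecidableEq B] [DecidableEq ι] (hW : IsRainbow M W)
    {x : (A × B) × ι} (hx : x.1 ∈ M x.2) (hleft : x.1.1 ∉ W.image (·.1.1))
    (hright : x.1.2 ∉ W.image (·.1.2)) (hindex : x.2 ∉ W.image Prod.snd) :
    IsRainbow M (insert x W) := by
  have hxW : x ∉ (W : Set ((A × B) × ι)) := fun h => hindex (mem_image_of_mem _ h)
  refine ⟨?_, ?_, ?_, ?_⟩
  · rw [coe_insert, Set.injOn_insert hxW, ← coe_image]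
    exact ⟨hW.injOn_left, hleft⟩
  · rw [coe_insert, Set.injOn_insert hxW, ← coe_image]
    exact ⟨hW.injOn_right, hright⟩
  · rw [coe_insert, Set.injOn_insert hxW, ← coe_image]
    exact ⟨hW.injOn_index, hindex⟩
  · intro p hp
    rcases mem_insert.1 hp with rfl | hp
    exacts [hx, hW.mem p hp]

lemma hasRainbowMatching {m : ℕ} {M : Fin m → Finset (A × B)}
    {P : Finset ((A × B) × Fin m)} (hP : IsRainbow M P) :
    HasRainbowMatching M P.card := by
  let g : Fin P.card → (P : Set ((A × B) × Fin m)) := P.equivFin.symm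
  have hg : g.Injective := P.equivFin.symm.injective
  exact ⟨fun j => (g j).1.1, fun j => (g j).1.2,
    (Set.injOn_iff_injective.1 hP.injOn_index).comp hg,
    (Set.injOn_iff_injective.1 hP.injOn_left).comp hg,
    (Set.injOn_iff_injective.1 hP.injOn_right).comp hg,
    fun j => hP.mem _ (g j).2⟩

end IsRainbow

section Augmentation

variable [DecidableEq A] [DecidableEq B] [DecidableEq ι]
  {M : ι → Finset (A × B)} {P D W : Finset ((A × B) × ι)} {U : Finset ι}

structure IsReroute (M : ι → Finset (A × B)) (P D : Finset ((A × B) × ι)) (U : Finset ι)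
    (W : Finset ((A × B) × ι)) : Prop where
  isRainbow : IsRainbow M W
  card_eq : W.card = P.card
  sdiff_subset : P \ D ⊆ W
  image_right : W.image (·.1.2) = P.image (·.1.2)
  image_index_subset : W.image Prod.snd ⊆ P.image Prod.snd ∪ U

def Releases (M : ι → Finset (A × B)) (P D : Finset ((A × B) × ι)) (U : Finset ι) : Prop :=
  ∀ d ∈ D, ∃ W, IsReroute M P D U W ∧ d.1.1 ∉ W.image (·.1.1)

lemma IsReroute.self (hP : IsRainbow M P) : IsReroute M P D U P :=
  ⟨hP, rfl, Finset.sdiff_subset, rfl, subset_union_left⟩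

lemma IsReroute.mono {D' : Finset ((A × B) × ι)} {U' : Finset ι} (hW : IsReroute M P D U W)
    (hD : D ⊆ D') (hU : U ⊆ U') : IsReroute M P D' U' W :=
  ⟨hW.isRainbow, hW.card_eq, (sdiff_subset_sdiff subset_rfl hD).trans hW.sdiff_subset,
    hW.image_right, hW.image_index_subset.trans (union_subset_union subset_rfl hU)⟩

lemma IsReroute.index_notMem (hW : IsReroute M P D U W) {u : ι}
    (hu : u ∉ P.image Prod.snd ∪ U) : u ∉ W.image Prod.snd :=
  fun h => hu (hW.image_index_subset h)

lemma IsReroute.exists_augment (hW : IsReroute M P D U W) {e : A × B} {u : ι} (he : e ∈ M u)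
    (hu : u ∉ P.image Prod.snd ∪ U) (heW : e.1 ∉ W.image (·.1.1))
    (heP : e.2 ∉ P.image (·.1.2)) :
    ∃ Q, IsRainbow M Q ∧ Q.card = P.card + 1 := by
  have huW := hW.index_notMem hu
  refine ⟨insert (e, u) W, hW.isRainbow.insert he heW (hW.image_right ▸ heP) huW, ?_⟩
  rw [card_insert_of_notMem fun h => huW (mem_image_of_mem _ h), hW.card_eq]

lemma IsReroute.exchange (hW : IsReroute M P D U W) {e : A × B} {u : ι} (he : e ∈ M u)
    (hu : u ∉ P.image Prod.snd ∪ U) (heW : e.1 ∉ W.image (·.1.1))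
    {p : (A × B) × ι} (hp : p ∈ P \ D) (hpe : p.1.2 = e.2) :
    IsReroute M P (insert p D) (insert u U) (insert (e, u) (W.erase p)) ∧
      p.1.1 ∉ (insert (e, u) (W.erase p)).image (·.1.1) := by
  have hpW : p ∈ W := hW.sdiff_subset hp
  have huW := hW.index_notMem hu
  have hsub : W.erase p ⊆ W := erase_subset _ _
  have huW' : u ∉ (W.erase p).image Prod.snd := fun h => huW (image_subset_image hsub h)
  refine ⟨⟨?_, ?_, ?_, ?_, ?_⟩, ?_⟩
  · refine (hW.isRainbow.mono hsub).insert he (fun h => heW (image_subset_image hsub h)) ?_ huW'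
    exact hpe ▸ hW.isRainbow.injOn_right.notMem_image_erase hpW
  · rw [card_insert_of_notMem fun h => huW' (mem_image_of_mem _ h), card_erase_of_mem hpW,
      Nat.sub_add_cancel (card_pos.2 ⟨p, hpW⟩), hW.card_eq]
  · intro q hq
    obtain ⟨hqP, hqD⟩ := mem_sdiff.1 hq
    rw [mem_insert, not_or] at hqD
    exact mem_insert_of_mem (mem_erase.2 ⟨hqD.1, hW.sdiff_subset (mem_sdiff.2 ⟨hqP, hqD.2⟩)⟩)
  · rw [image_insert_erase_of_eq hpW hpe.symm, hW.image_right]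
  · rw [image_insert]
    exact insert_subset (mem_union_right _ (mem_insert_self _ _))
      (((image_subset_image hsub).trans hW.image_index_subset).trans
        (union_subset_union subset_rfl (subset_insert _ _)))
  · rw [image_insert, mem_insert, not_or]
    exact ⟨fun h => heW (h ▸ mem_image_of_mem _ hpW),
      hW.isRainbow.injOn_left.notMem_image_erase hpW⟩

variable [Fintype ι]

lemma Releases.exists_insert (hM : ∀ i, IsMatching (M i) ∧ P.card < (M i).card)
    (hι : 2 * P.card < Fintype.card ι) (hP : IsRainbow M P)
    (hmax : ¬ ∃ Q, IsRainbow M Q ∧ Q.card = P.card + 1)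
    (hDP : D ⊆ P) (hU : U.card ≤ D.card) (hrel : Releases M P D U) :
    ∃ p ∈ P \ D, ∃ u, Releases M P (insert p D) (insert u U) := by
  have hD := card_le_card hDP
  obtain ⟨u, -, hu⟩ : ∃ u ∈ univ, u ∉ P.image Prod.snd ∪ U := by
    refine exists_mem_notMem_of_card_lt_card ?_
    calc (P.image Prod.snd ∪ U).card ≤ P.card + D.card :=
          (card_union_le _ _).trans (add_le_add card_image_le hU)
      _ < univ.card := by rw [card_univ]; omega
  obtain ⟨e, he, heA, heB⟩ := (hM u).1.exists_mem_notMem_notMem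
      ((P \ D).image (·.1.1)) (D.image (·.1.2)) <| by
    calc _ ≤ (P \ D).card + D.card := add_le_add card_image_le card_image_le
      _ = P.card := card_sdiff_add_card_eq_card hDP
      _ < (M u).card := (hM u).2
  obtain ⟨W, hW, heW⟩ : ∃ W, IsReroute M P D U W ∧ e.1 ∉ W.image (·.1.1) := by
    by_cases heP : e.1 ∈ P.image (·.1.1)
    · obtain ⟨d, hd, hde⟩ := Finset.mem_image.1 heP
      have hdD : d ∈ D := by
        by_contra hdD
        exact heA (hde ▸ mem_image_of_mem _ (mem_sdiff.2 ⟨hd, hdD⟩))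
      exact hde ▸ hrel d hdD
    · exact ⟨P, IsReroute.self hP, heP⟩
  by_cases heP : e.2 ∈ P.image (·.1.2)
  · obtain ⟨p, hp, hpe⟩ := Finset.mem_image.1 heP
    have hpD : p ∉ D := fun h => heB (hpe ▸ mem_image_of_mem _ h)
    refine ⟨p, mem_sdiff.2 ⟨hp, hpD⟩, u, fun d hd => ?_⟩
    rcases mem_insert.1 hd with rfl | hd
    · exact ⟨_, hW.exchange he hu heW (mem_sdiff.2 ⟨hp, hpD⟩) hpe⟩
    · obtain ⟨W', hW', hdW'⟩ := hrel d hd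
      exact ⟨W', hW'.mono (subset_insert _ _) (subset_insert _ _), hdW'⟩
  · exact absurd (hW.exists_augment he hu heW heP) hmax

theorem exists_isRainbow_card_succ (hM : ∀ i, IsMatching (M i) ∧ P.card < (M i).card)
    (hι : 2 * P.card < Fintype.card ι) (hP : IsRainbow M P) :
    ∃ Q, IsRainbow M Q ∧ Q.card = P.card + 1 := by
  by_contra hmax
  have release : ∀ j ≤ P.card + 1,
      ∃ D ⊆ P, D.card = j ∧ ∃ U : Finset ι, U.card ≤ j ∧ Releases M P D U := by
    intro j
    induction j with
    | zero => exact fun _ => ⟨∅, empty_subset _, rfl, ∅, le_rfl, by simp [Releases]⟩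
    | succ j ih =>
      intro hj
      obtain ⟨D, hDP, rfl, U, hU, hrel⟩ := ih (by omega)
      obtain ⟨p, hp, u, hrel'⟩ := hrel.exists_insert hM hι hP hmax hDP hU
      obtain ⟨hpP, hpD⟩ := mem_sdiff.1 hp
      exact ⟨insert p D, insert_subset hpP hDP, card_insert_of_notMem hpD, insert u U,
        (card_insert_le _ _).trans (by omega), hrel'⟩
  obtain ⟨D, hDP, hD, -⟩ := release _ le_rfl
  have := card_le_card hDP
  omega

theorem exists_isRainbow_card {n : ℕ} (hM : ∀ i, IsMatching (M i) ∧ n ≤ (M i).card)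
    (hι : 2 * n - 1 ≤ Fintype.card ι) : ∃ P, IsRainbow M P ∧ P.card = n := by
  suffices ∀ k ≤ n, ∃ P, IsRainbow M P ∧ P.card = k from this n le_rfl
  intro k
  induction k with
  | zero => exact fun _ => ⟨∅, ⟨by simp, by simp, by simp, by simp⟩, rfl⟩
  | succ k ih =>
    intro hk
    obtain ⟨P, hP, rfl⟩ := ih (by omega)
    exact exists_isRainbow_card_succ (fun i => ⟨(hM i).1, by have := (hM i).2; omega⟩)
      (by omega) hP

end Augmentation

end

/-- **Drisko's theorem.** Any family of `2n - 1` matchings of size `n` in a bipartite graph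
possesses a rainbow matching of size `n`. -/
theorem drisko {A B : Type*} {n : ℕ} (M : Fin (2 * n - 1) → Finset (A × B))
    (hM : ∀ i, IsMatching (M i) ∧ (M i).card = n) :
    HasRainbowMatching M n := by
  classical
  obtain ⟨P, hP, hcard⟩ :=
    exists_isRainbow_card (M := M) (fun i => ⟨(hM i).1, (hM i).2.ge⟩) (by simp)
  simpa only [hcard] using hP.hasRainbowMatching
end

section
/- For n > 1, the family of 2n − 2 matchings of size n obtained from a cycle of length 2n by taking n − 1 copies of the matching of even edges and n − 1 copies of the matching of odd edges has no rainbow matching of size n. Formally: let a_0, …, a_{n−1} be distinct elements of A and b_0, …, b_{n−1} be distinct elements of B, let E = {(a_i, b_i) : i ∈ ZMod n} and O = {(a_i, b_{i+1}) : i ∈ ZMod n} (indices mod n), and let M : Fin (2n−2) → Finset (A × B) take the value E on n − 1 indices and the value O on the remaining n − 1 indices. Then the family M has no rainbow matching of size n. -/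
/-- **Sharpness of Drisko's theorem.** For `n > 1`, taking a cycle of length `2n` with
vertices `a_0, b_0, a_1, b_1, …` (indices mod `n`), the family of `2n - 2` matchings
consisting of `n - 1` copies of the even-edge matching `E = {(a_i, b_i)}` and `n - 1`
copies of the odd-edge matching `O = {(a_i, b_{i+1})}` has no rainbow matching of size `n`. -/
theorem drisko_sharp {A B : Type*} [DecidableEq A] [DecidableEq B] {n : ℕ} [NeZero n]
    (hn : 1 < n) (a : ZMod n → A) (b : ZMod n → B)
    (ha : Function.Injective a) (hb : Function.Injective b)
    (M : Fin (2 * n - 2) → Finset (A × B))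
    (hEO : ∀ i, M i = Finset.image (fun j : ZMod n => (a j, b j)) Finset.univ ∨
                M i = Finset.image (fun j : ZMod n => (a j, b (j + 1))) Finset.univ)
    (hcount : (Finset.univ.filter
        (fun i => M i = Finset.image (fun j : ZMod n => (a j, b j)) Finset.univ)).card
        = n - 1) :
    ¬ HasRainbowMatching M n := by
  haveI : Fact (1 < n) := ⟨hn⟩
  rintro ⟨e, idx, hidx, h1, h2, hmem⟩
  have key : ∀ j : Fin n, ∃ s t : ZMod n, (t = s ∨ t = s + 1) ∧ e j = (a s, b t) := by
    intro j
    rcases hEO (idx j) with h | h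
    · have hm := hmem j
      rw [h, Finset.mem_image] at hm
      obtain ⟨s, -, hs⟩ := hm
      exact ⟨s, s, Or.inl rfl, hs.symm⟩
    · have hm := hmem j
      rw [h, Finset.mem_image] at hm
      obtain ⟨s, -, hs⟩ := hm
      exact ⟨s, s + 1, Or.inr rfl, hs.symm⟩
  choose σ τ hτ heq using key
  have hσ1 : ∀ j, (e j).1 = a (σ j) := fun j => by rw [heq j]
  have hτ2 : ∀ j, (e j).2 = b (τ j) := fun j => by rw [heq j]
  have hσinj : Function.Injective σ := fun i j hij => h1 (by simp only [hσ1, hij])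
  have hτinj : Function.Injective τ := fun i j hij => h2 (by simp only [hτ2, hij])
  have hcard : Fintype.card (Fin n) = Fintype.card (ZMod n) := by simp [ZMod.card]
  have hσbij : Function.Bijective σ :=
    (Fintype.bijective_iff_injective_and_card σ).2 ⟨hσinj, hcard⟩
  have hτbij : Function.Bijective τ :=
    (Fintype.bijective_iff_injective_and_card τ).2 ⟨hτinj, hcard⟩
  have hsum : ∑ j : Fin n, σ j = ∑ j : Fin n, τ j := by
    rw [hσbij.sum_comp (fun x => x), ← hτbij.sum_comp (fun x => x)]
  set δ : Fin n → ℕ := fun j => if τ j = σ j then 0 else 1 with hδ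
  have hτδ : ∀ j, τ j = σ j + (δ j : ZMod n) := by
    intro j
    by_cases h : τ j = σ j
    · simp [hδ, h]
    · rcases hτ j with h' | h'
      · exact absurd h' h
      · simp [hδ, h, h']
  have hsumδ : ((∑ j : Fin n, δ j : ℕ) : ZMod n) = 0 := by
    have h0 : ∑ j : Fin n, τ j = ∑ j : Fin n, σ j + ∑ j : Fin n, (δ j : ZMod n) := by
      rw [← Finset.sum_add_distrib]
      exact Finset.sum_congr rfl fun j _ => hτδ j
    rw [← hsum, left_eq_add] at h0
    rw [Nat.cast_sum]
    exact h0
  have hdvd : n ∣ ∑ j : Fin n, δ j := (ZMod.natCast_eq_zero_iff _ _).1 hsumδ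
  have hδle : ∀ j ∈ (Finset.univ : Finset (Fin n)), δ j ≤ 1 := by
    intro j _; by_cases h : τ j = σ j <;> simp [hδ, h]
  have hle : ∑ j : Fin n, δ j ≤ n := by
    calc ∑ j : Fin n, δ j ≤ ∑ _j : Fin n, 1 := Finset.sum_le_sum hδle
      _ = n := by simp
  have hone : (1 : ZMod n) ≠ 0 := one_ne_zero
  have hcountO : (Finset.univ.filter
      (fun i => ¬ M i = Finset.image (fun j : ZMod n => (a j, b j)) Finset.univ)).card
      = n - 1 := by
    have h0 := Finset.card_filter_add_card_filter_not
      (s := (Finset.univ : Finset (Fin (2 * n - 2))))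
      (p := fun i => M i = Finset.image (fun j : ZMod n => (a j, b j)) Finset.univ)
    rw [hcount, Finset.card_univ, Fintype.card_fin] at h0
    omega
  have hcases : (∑ j : Fin n, δ j) = 0 ∨ (∑ j : Fin n, δ j) = n := by
    rcases Nat.lt_or_ge (∑ j : Fin n, δ j) n with h | h
    · exact Or.inl (Nat.eq_zero_of_dvd_of_lt hdvd h)
    · exact Or.inr (le_antisymm hle h)
  rcases hcases with hc | hc
  · -- all edges are even edges
    have hall : ∀ j : Fin n, τ j = σ j := by
      intro j
      have := (Finset.sum_eq_zero_iff.1 hc) j (Finset.mem_univ j)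
      by_contra h
      simp [hδ, h] at this
    have hME : ∀ j, M (idx j) = Finset.image (fun j : ZMod n => (a j, b j)) Finset.univ := by
      intro j
      rcases hEO (idx j) with h | h
      · exact h
      · exfalso
        have hm := hmem j
        rw [h, Finset.mem_image] at hm
        obtain ⟨s, -, hs⟩ := hm
        rw [heq j, hall j, Prod.mk.injEq] at hs
        have hs1 : s = σ j := ha hs.1
        have hs2 : s + 1 = σ j := hb hs.2
        rw [hs1, add_eq_left] at hs2
        exact hone hs2
    have hsub : ∀ j : Fin n, idx j ∈ Finset.univ.filter
        (fun i => M i = Finset.image (fun j : ZMod n => (a j, b j)) Finset.univ) := by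
      intro j; simp [hME j]
    have := Finset.card_le_card_of_injOn (s := Finset.univ) idx (fun j _ => hsub j)
      (hidx.injOn)
    rw [hcount, Finset.card_univ, Fintype.card_fin] at this
    omega
  · -- all edges are odd edges
    have hall : ∀ j : Fin n, τ j = σ j + 1 := by
      have hc' : ∑ j : Fin n, δ j = ∑ _j : Fin n, 1 := by simpa using hc
      have := (Finset.sum_eq_sum_iff_of_le hδle).1 hc'
      intro j
      have h1' := this j (Finset.mem_univ j)
      by_cases h : τ j = σ j
      · simp [hδ, h] at h1'
      · rcases hτ j with h' | h'
        · exact absurd h' h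
        · exact h'
    have hME : ∀ j, ¬ M (idx j) = Finset.image (fun j : ZMod n => (a j, b j)) Finset.univ := by
      intro j h
      have hm := hmem j
      rw [h, Finset.mem_image] at hm
      obtain ⟨s, -, hs⟩ := hm
      rw [heq j, hall j, Prod.mk.injEq] at hs
      have hs1 : s = σ j := ha hs.1
      have hs2 : s = σ j + 1 := hb hs.2
      rw [hs1, left_eq_add] at hs2
      exact hone hs2
    have hsub : ∀ j : Fin n, idx j ∈ Finset.univ.filter
        (fun i => ¬ M i = Finset.image (fun j : ZMod n => (a j, b j)) Finset.univ) := by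
      intro j; simp only [Finset.mem_filter, Finset.mem_univ, true_and]; exact hME j
    have := Finset.card_le_card_of_injOn (s := Finset.univ) idx (fun j _ => hsub j)
      (hidx.injOn)
    rw [hcountO, Finset.card_univ, Fintype.card_fin] at this
    omega
end

section
/- Let a ≤ m and let M_1, …, M_m be matchings in a bipartite graph, ordered so that |M_1| ≤ |M_2| ≤ … ≤ |M_m|. If ∑_{i=1}^{m−a+1} (|M_i| − a + 1) ≥ a (as a sum of integers), then the family M_1, …, M_m has a rainbow matching of size a. Formally: if M : Fin m → Finset (A × B), each M i is a matching (both coordinate projections injective), the sizes |M i| are nondecreasing in i, and the integer sum over the first m − a + 1 indices i of (|M i| − a + 1) is at least a, then there exists a rainbow matching of size a. -/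
/-!
Take a rainbow matching `R` of maximum size `r` and suppose `r < a`. Pick a set `P` of
`m - a + 1` colours missing from `R`. Call an edge of `R` *uncoverable* if alternating swaps,
which trade an edge of `R` for an edge of a colour in `P` through the same `A`-vertex, can free
its `B`-vertex. Adding the colours of `P` one at a time, each colour `N` makes at least
`|M_N| - r` further edges uncoverable: an edge of `M_N` whose `B`-vertex can be freed either
augments a swapped matching (impossible by maximality) or meets an uncoverable edge at its
`A`-vertex, while the other edges of `M_N` have their `B`-vertices covered by distinct edges
of `R` that are not yet uncoverable. Hence
`∑_{i ∈ P} (|M_i| - r) ≤ r`, whereas monotonicity of the sizes gives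
`∑_{i ∈ P} (|M_i| - r) ≥ ∑_{i ≤ m - a + 1} (|M_i| - a + 1) ≥ a > r`.
-/

open Finset

lemma IsMatching.injOn_fst_s5 {A B : Type*} {M : Finset (A × B)} (h : IsMatching M) :
    Set.InjOn Prod.fst (M : Set (A × B)) :=
  fun e he f hf => h.1 e he f hf

lemma IsMatching.injOn_snd_s5 {A B : Type*} {M : Finset (A × B)} (h : IsMatching M) :
    Set.InjOn Prod.snd (M : Set (A × B)) :=
  fun e he f hf => h.2 e he f hf

lemma Fin.val_le_of_strictMono {t m : ℕ} {f : Fin t → Fin m} (hf : StrictMono f) (k : Fin t) :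
    (k : ℕ) ≤ f k := by
  have h := card_le_card_of_injOn f (s := Iic k) (t := Iic (f k))
    (fun i hi => by simpa using hf.monotone (by simpa using hi)) hf.injective.injOn
  simpa using h

lemma sum_filter_val_lt_le_sum {β : Type*} [AddCommMonoid β] [PartialOrder β]
    [IsOrderedAddMonoid β] {m t : ℕ} {g : Fin m → β} (hg : Monotone g) {P : Finset (Fin m)}
    (hP : P.card = t) (htm : t ≤ m) :
    ∑ i ∈ univ.filter (fun i : Fin m => (i : ℕ) < t), g i ≤ ∑ i ∈ P, g i := by
  have hinit : univ.filter (fun i : Fin m => (i : ℕ) < t) = univ.map (Fin.castLEEmb htm) := by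
    ext i
    simp only [mem_filter, mem_univ, true_and, mem_map]
    exact ⟨fun h => ⟨⟨i, h⟩, rfl⟩, by rintro ⟨k, -, rfl⟩; exact k.2⟩
  rw [hinit, ← P.map_orderEmbOfFin_univ hP, sum_map, sum_map]
  exact sum_le_sum fun k _ => hg (Fin.val_le_of_strictMono (P.orderEmbOfFin hP).strictMono k)

namespace Rainbow

variable {A B ι : Type*} (M : ι → Finset (A × B))

/-- A rainbow matching encoded as the finite set of its coloured edges `(e, i)`, `e ∈ M i`. -/
structure IsRainbow (R : Finset ((A × B) × ι)) : Prop where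
  mem : ∀ p ∈ R, p.1 ∈ M p.2
  injOn_fst_s5 : Set.InjOn (fun p => p.1.1) (R : Set ((A × B) × ι))
  injOn_snd_s5 : Set.InjOn (fun p => p.1.2) (R : Set ((A × B) × ι))
  injOn_color : Set.InjOn Prod.snd (R : Set ((A × B) × ι))

/-- Abstracts the matchings reached from `R` by alternating swaps that bring in colours of `P`
and replace edges of `D` (each new edge goes through the `A`-vertex of the edge it replaced). -/
structure IsSwapState (R D S : Finset ((A × B) × ι)) (P : Finset ι) : Prop where
  rainbow : IsRainbow M S
  card_eq : S.card = R.card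
  color_mem : ∀ z ∈ S, z ∉ R → z.2 ∈ P
  exists_fst_eq : ∀ z ∈ S, z ∉ R → ∃ q ∈ D, q.1.1 = z.1.1

def CanUncover (R D : Finset ((A × B) × ι)) (P : Finset ι) (b : B) : Prop :=
  ∃ S, IsSwapState M R D S P ∧ ∀ z ∈ S, z.1.2 ≠ b

variable {M} {R D S : Finset ((A × B) × ι)} {P : Finset ι}

lemma isRainbow_empty : IsRainbow M ∅ :=
  ⟨by simp, by simp, by simp, by simp⟩

lemma IsRainbow.mono (hS : IsRainbow M S) (hRS : R ⊆ S) : IsRainbow M R :=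
  ⟨fun p hp => hS.mem p (hRS hp), hS.injOn_fst_s5.mono hRS, hS.injOn_snd_s5.mono hRS,
    hS.injOn_color.mono hRS⟩

lemma IsRainbow.insert [DecidableEq A] [DecidableEq B] [DecidableEq ι] (hS : IsRainbow M S)
    {f : A × B} {N : ι} (hf : f ∈ M N) (hA : ∀ z ∈ S, z.1.1 ≠ f.1)
    (hB : ∀ z ∈ S, z.1.2 ≠ f.2) (hN : ∀ z ∈ S, z.2 ≠ N) : IsRainbow M (insert (f, N) S) := by
  have hfS : (f, N) ∉ (S : Set ((A × B) × ι)) := fun h => hN _ h rfl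
  refine ⟨?_, ?_, ?_, ?_⟩
  · simpa [hf] using hS.mem
  · rw [coe_insert, Set.injOn_insert hfS]
    exact ⟨hS.injOn_fst_s5, fun ⟨z, hz, hzf⟩ => hA z hz hzf⟩
  · rw [coe_insert, Set.injOn_insert hfS]
    exact ⟨hS.injOn_snd_s5, fun ⟨z, hz, hzf⟩ => hB z hz hzf⟩
  · rw [coe_insert, Set.injOn_insert hfS]
    exact ⟨hS.injOn_color, fun ⟨z, hz, hzf⟩ => hN z hz hzf⟩

lemma IsRainbow.hasRainbowMatching {m : ℕ} {M : Fin m → Finset (A × B)}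
    {R : Finset ((A × B) × Fin m)} (hR : IsRainbow M R) : HasRainbowMatching M R.card := by
  let σ := R.equivFin.symm
  refine ⟨fun j => (σ j).1.1, fun j => (σ j).1.2, fun j j' h => ?_, fun j j' h => ?_,
    fun j j' h => ?_, fun j => hR.mem _ (σ j).2⟩
  · exact σ.injective (Subtype.ext (hR.injOn_color (σ j).2 (σ j').2 h))
  · exact σ.injective (Subtype.ext (hR.injOn_fst_s5 (σ j).2 (σ j').2 h))
  · exact σ.injective (Subtype.ext (hR.injOn_snd_s5 (σ j).2 (σ j').2 h))

lemma IsRainbow.isSwapState (hR : IsRainbow M R) : IsSwapState M R D R P :=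
  ⟨hR, rfl, fun _ hz hzR => absurd hz hzR, fun _ hz hzR => absurd hz hzR⟩

lemma IsSwapState.mono {D' : Finset ((A × B) × ι)} {P' : Finset ι} (hS : IsSwapState M R D S P)
    (hD : D ⊆ D') (hP : P ⊆ P') : IsSwapState M R D' S P' :=
  ⟨hS.rainbow, hS.card_eq, fun z hz hzR => hP (hS.color_mem z hz hzR),
    fun z hz hzR => (hS.exists_fst_eq z hz hzR).imp fun _ hq => ⟨hD hq.1, hq.2⟩⟩

lemma CanUncover.mono {D' : Finset ((A × B) × ι)} {P' : Finset ι} {b : B}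
    (h : CanUncover M R D P b) (hD : D ⊆ D') (hP : P ⊆ P') : CanUncover M R D' P' b :=
  h.imp fun _ hS => ⟨hS.1.mono hD hP, hS.2⟩

lemma IsSwapState.color_ne (hS : IsSwapState M R D S P) {N : ι} (hNR : ∀ z ∈ R, z.2 ≠ N)
    (hNP : N ∉ P) : ∀ z ∈ S, z.2 ≠ N := by
  intro z hz hzN
  by_cases hzR : z ∈ R
  · exact hNR z hzR hzN
  · exact hNP (hzN ▸ hS.color_mem z hz hzR)

lemma IsSwapState.canUncover_swap [DecidableEq A] [DecidableEq B] [DecidableEq ι]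
    (hS : IsSwapState M R D S P) {w : (A × B) × ι} (hw : w ∈ S) {f : A × B} {N : ι}
    (hf : f ∈ M N) (hwf : w.1.1 = f.1) (hfS : ∀ z ∈ S, z.1.2 ≠ f.2) (hNS : ∀ z ∈ S, z.2 ≠ N) :
    CanUncover M R (insert w D) (insert N P) w.1.2 := by
  have hfresh : (f, N) ∉ S.erase w := fun h => hNS _ (mem_of_mem_erase h) rfl
  have hne_w {z} (hz : z ∈ S.erase w) : z ≠ w := ne_of_mem_erase hz
  have hzS {z} (hz : z ∈ S.erase w) : z ∈ S := mem_of_mem_erase hz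
  refine ⟨insert (f, N) (S.erase w), ⟨?_, ?_, ?_, ?_⟩, ?_⟩
  · refine (hS.rainbow.mono (erase_subset w S)).insert hf (fun z hz hzf => hne_w hz ?_)
      (fun z hz => hfS z (hzS hz)) (fun z hz => hNS z (hzS hz))
    exact hS.rainbow.injOn_fst_s5 (hzS hz) hw (hzf.trans hwf.symm)
  · rw [card_insert_of_notMem hfresh, card_erase_add_one hw, hS.card_eq]
  · intro z hz hzR
    rcases mem_insert.1 hz with rfl | hz
    · exact mem_insert_self N P
    · exact mem_insert_of_mem (hS.color_mem z (hzS hz) hzR)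
  · intro z hz hzR
    rcases mem_insert.1 hz with rfl | hz
    · exact ⟨w, mem_insert_self w D, hwf⟩
    · obtain ⟨q, hqD, hqz⟩ := hS.exists_fst_eq z (hzS hz) hzR
      exact ⟨q, mem_insert_of_mem hqD, hqz⟩
  · intro z hz hzw
    rcases mem_insert.1 hz with rfl | hz
    · exact hfS w hw hzw.symm
    · exact hne_w hz (hS.rainbow.injOn_snd_s5 (hzS hz) hw hzw)

lemma exists_partner [DecidableEq A] [DecidableEq B] [DecidableEq ι]
    (hmax : ∀ Q, IsRainbow M Q → Q.card ≠ R.card + 1) (hDR : D ⊆ R) {N : ι}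
    (hNR : ∀ z ∈ R, z.2 ≠ N) (hNP : N ∉ P) {f : A × B} (hf : f ∈ M N)
    (hfree : CanUncover M R D P f.2) :
    ∃ q ∈ R, q.1.1 = f.1 ∧ (q ∈ D ∨ CanUncover M R (insert q D) (insert N P) q.1.2) := by
  obtain ⟨S, hS, hfS⟩ := hfree
  have hNS := hS.color_ne hNR hNP
  by_cases hA : ∃ w ∈ S, w.1.1 = f.1
  · obtain ⟨w, hwS, hwf⟩ := hA
    by_cases hwR : w ∈ R
    · exact ⟨w, hwR, hwf, .inr (hS.canUncover_swap hwS hf hwf hfS hNS)⟩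
    · obtain ⟨q, hqD, hqw⟩ := hS.exists_fst_eq w hwS hwR
      exact ⟨q, hDR hqD, hqw.trans hwf, .inl hqD⟩
  · push Not at hA
    refine absurd ?_ (hmax _ (hS.rainbow.insert hf hA hfS hNS))
    rw [card_insert_of_notMem fun h => hNS _ h rfl, hS.card_eq]

lemma exists_card_add_card_le [DecidableEq ι]
    (hR : IsRainbow M R) (hmax : ∀ Q, IsRainbow M Q → Q.card ≠ R.card + 1) {N : ι}
    (hM : IsMatching (M N)) (hNR : ∀ z ∈ R, z.2 ≠ N) (hNP : N ∉ P) (hDR : D ⊆ R)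
    (hD : ∀ p ∈ D, CanUncover M R D P p.1.2) :
    ∃ D' ⊆ R, (∀ p ∈ D', CanUncover M R D' (insert N P) p.1.2) ∧
      (M N).card + D.card ≤ D'.card + R.card := by
  classical
  set E := (M N).filter fun f => CanUncover M R D P f.2
  have partner : ∀ f ∈ E, ∃ q ∈ R, q.1.1 = f.1 ∧
      (q ∈ D ∨ CanUncover M R (insert q D) (insert N P) q.1.2) := fun f hf =>
    exists_partner hmax hDR hNR hNP (mem_filter.1 hf).1 (mem_filter.1 hf).2
  set D' := D ∪ R.filter fun q => ∃ f ∈ E, q.1.1 = f.1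
  have hDD' : D ⊆ D' := subset_union_left
  refine ⟨D', union_subset hDR (filter_subset _ R), ?_, ?_⟩
  · intro p hp
    rcases mem_union.1 hp with hpD | hpF
    · exact (hD p hpD).mono hDD' (subset_insert N P)
    obtain ⟨hpR, f, hfE, hpf⟩ := mem_filter.1 hpF
    obtain ⟨q, hqR, hqf, hq⟩ := partner f hfE
    obtain rfl : q = p := hR.injOn_fst_s5 hqR hpR (hqf.trans hpf.symm)
    rcases hq with hqD | hq
    · exact (hD q hqD).mono hDD' (subset_insert N P)
    · exact hq.mono (insert_subset hp hDD') subset_rfl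
  · have hE : E.card ≤ D'.card := by
      refine card_le_card_of_forall_subsingleton
        (fun (f : A × B) (q : (A × B) × ι) => q.1.1 = f.1) (fun f hf => ?_)
        fun _ _ _ hf₁ _ hf₂ => hM.injOn_fst_s5 (filter_subset _ _ hf₁.1)
          (filter_subset _ _ hf₂.1) (hf₁.2.symm.trans hf₂.2)
      obtain ⟨q, hqR, hqf, -⟩ := partner f hf
      exact ⟨q, mem_union_right D (mem_filter.2 ⟨hqR, f, hf, hqf⟩), hqf⟩
    have hEc : ((M N).filter fun f => ¬CanUncover M R D P f.2).card ≤ (R \ D).card := by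
      refine card_le_card_of_forall_subsingleton
        (fun (f : A × B) (z : (A × B) × ι) => z.1.2 = f.2) (fun f hf => ?_)
        fun _ _ _ hf₁ _ hf₂ => hM.injOn_snd_s5 (filter_subset _ _ hf₁.1)
          (filter_subset _ _ hf₂.1) (hf₁.2.symm.trans hf₂.2)
      have hfree := (mem_filter.1 hf).2
      obtain ⟨z, hzR, hzf⟩ : ∃ z ∈ R, z.1.2 = f.2 := by
        by_contra! h
        exact hfree ⟨R, hR.isSwapState, h⟩
      exact ⟨z, mem_sdiff.2 ⟨hzR, fun hzD => hfree (hzf ▸ hD z hzD)⟩, hzf⟩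
    have hsplit : E.card + ((M N).filter fun f => ¬CanUncover M R D P f.2).card = (M N).card :=
      card_filter_add_card_filter_not _
    have hRD := card_sdiff_add_card_eq_card hDR
    omega

lemma exists_isRainbow_card_eq_or_maximal (M : ι → Finset (A × B)) (a : ℕ) :
    (∃ R, IsRainbow M R ∧ R.card = a) ∨
      ∃ R, IsRainbow M R ∧ R.card < a ∧ ∀ Q, IsRainbow M Q → Q.card ≠ R.card + 1 := by
  induction a with
  | zero => exact .inl ⟨∅, isRainbow_empty, rfl⟩
  | succ a ih =>
    rcases ih with ⟨R, hR, rfl⟩ | ⟨R, hR, hRa, hmax⟩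
    · by_cases h : ∃ Q, IsRainbow M Q ∧ Q.card = R.card + 1
      · exact .inl h
      · exact .inr ⟨R, hR, lt_add_one _, fun Q hQ hQR => h ⟨Q, hQ, hQR⟩⟩
    · exact .inr ⟨R, hR, hRa.trans (lt_add_one a), hmax⟩

lemma exists_canUncover_sum_le (hR : IsRainbow M R)
    (hmax : ∀ Q, IsRainbow M Q → Q.card ≠ R.card + 1) (hM : ∀ i, IsMatching (M i))
    (P : Finset ι) (hP : ∀ z ∈ R, z.2 ∉ P) :
    ∃ D ⊆ R, (∀ p ∈ D, CanUncover M R D P p.1.2) ∧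
      ∑ i ∈ P, (((M i).card : ℤ) - R.card) ≤ D.card := by
  classical
  induction P using Finset.induction_on with
  | empty => exact ⟨∅, empty_subset R, by simp, by simp⟩
  | @insert N P hNP ih =>
    obtain ⟨D, hDR, hD, hsum⟩ := ih fun z hz hzP => hP z hz (mem_insert_of_mem hzP)
    have hNR : ∀ z ∈ R, z.2 ≠ N := fun z hz hzN => hP z hz (hzN ▸ mem_insert_self N P)
    obtain ⟨D', hD'R, hD', hcard⟩ := exists_card_add_card_le hR hmax (hM N) hNR hNP hDR hD
    refine ⟨D', hD'R, hD', ?_⟩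
    rw [sum_insert hNP]
    have : ((M N).card : ℤ) + D.card ≤ D'.card + R.card := by exact_mod_cast hcard
    linarith

end Rainbow

open Rainbow

/-- Let `a ≤ m` and let `M_1, …, M_m` be matchings in a bipartite graph with
`|M_1| ≤ … ≤ |M_m|`. If `∑_{i ≤ m - a + 1} (|M_i| - a + 1) ≥ a` (a sum of integers,
over the first `m - a + 1` matchings), then there is a rainbow matching of size `a`. -/
theorem rainbow_of_sum {A B : Type*} {m a : ℕ} (ham : a ≤ m)
    (M : Fin m → Finset (A × B)) (hM : ∀ i, IsMatching (M i))
    (hmono : ∀ i j : Fin m, i ≤ j → (M i).card ≤ (M j).card)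
    (hsum : (a : ℤ) ≤ ∑ i ∈ Finset.univ.filter (fun i : Fin m => (i : ℕ) < m - a + 1),
        (((M i).card : ℤ) - a + 1)) :
    HasRainbowMatching M a := by
  obtain ⟨R, hR, hRa⟩ | ⟨R, hR, hRa, hmax⟩ := exists_isRainbow_card_eq_or_maximal M a
  · exact hRa ▸ hR.hasRainbowMatching
  obtain ⟨P, hPfree, hPcard⟩ :=
    exists_subset_card_eq (s := (R.image Prod.snd)ᶜ) (n := m - a + 1)
    (by rw [card_compl, card_image_of_injOn hR.injOn_color, Fintype.card_fin]; omega)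
  obtain ⟨D, hDR, -, hDsum⟩ := exists_canUncover_sum_le hR hmax hM P
    fun z hz hzP => mem_compl.1 (hPfree hzP) (mem_image_of_mem _ hz)
  have hinit := sum_filter_val_lt_le_sum (g := fun i => ((M i).card : ℤ) - R.card)
    (fun i j hij => by simpa using hmono i j hij) hPcard (by omega)
  have hle : ∑ i ∈ univ.filter (fun i : Fin m => (i : ℕ) < m - a + 1),
        (((M i).card : ℤ) - a + 1) ≤
      ∑ i ∈ univ.filter (fun i : Fin m => (i : ℕ) < m - a + 1), (((M i).card : ℤ) - R.card) :=
    sum_le_sum fun i _ => by omega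
  have hD : (D.card : ℤ) ≤ R.card := by exact_mod_cast card_le_card hDR
  omega
end

section
/- Let N = (D, s, t) be a network with vertex set V and let L = (P_1, …, P_m), where each P_i is a finite set of pairwise innerly disjoint s–t paths in D. If the total number of paths ∑_{i=1}^m |P_i| is strictly greater than |V| − 2 (the number of vertices other than s and t), then t is reachable, i.e., there exists an L-multicolored s–t path. -/
/-- The edges of a path given as a list of vertices: the pairs of consecutive vertices. -/
def pathEdges {V : Type*} (l : List V) : List (V × V) := l.zip l.tail

/-- `l` is a path from `s` to `v` in the digraph with edge relation `E`: a list of pairwise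
distinct vertices, starting at `s`, ending at `v`, consecutive vertices joined by edges. -/
def IsPath {V : Type*} (E : V → V → Prop) (s v : V) (l : List V) : Prop :=
  l.Nodup ∧ l.head? = some s ∧ l.getLast? = some v ∧ l.Chain' E

/-- Two `s`–`t` paths are innerly disjoint if they share no vertex other than `s` and `t`. -/
def InnerlyDisjoint {V : Type*} (s t : V) (p q : List V) : Prop :=
  ∀ x ∈ p, x ∈ q → x = s ∨ x = t

/-- Given a family of paths `P` with a coloring `c` into `m` color classes, a path `Q` is
`L`-multicolored if there is an injection assigning to each edge of `Q` a color such that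
the edge lies on some path of that color class. -/
def MulticoloredCl {V : Type*} {N m : ℕ} (P : Fin N → List V) (c : Fin N → Fin m)
    (Q : List V) : Prop :=
  ∃ g : Fin (pathEdges Q).length → Fin m, Function.Injective g ∧
    ∀ e : Fin (pathEdges Q).length, ∃ j : Fin N, c j = g e ∧ (pathEdges Q).get e ∈ pathEdges (P j)

/-! Let `R X` be the set of vertices reachable from `s` by rainbow paths using only colours from
`X`. As long as `t` is unreachable, adding a colour `a` to `X` enlarges `R X` by at least the
number of paths of colour `a`: such a path starts in `R X` (at `s`) and ends outside
`R (insert a X)` (at `t`), so some edge of it leaves `R X`, and the head of that edge is an inner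
vertex newly reachable with colour `a`. Paths of one colour are innerly disjoint, so these heads
are distinct. Adding the colours one by one gives `N + 1 ≤ #R univ ≤ |V| - 1`. -/

section PathEdges

variable {V : Type*}

@[simp]
theorem pathEdges_cons_cons (x y : V) (l : List V) :
    pathEdges (x :: y :: l) = (x, y) :: pathEdges (y :: l) := rfl

theorem snd_mem_of_mem_pathEdges {l : List V} {e : V × V} (he : e ∈ pathEdges l) : e.2 ∈ l :=
  List.mem_of_mem_tail (List.of_mem_zip he).2

theorem List.IsChain.rel_of_mem_pathEdges {R : V → V → Prop} :
    ∀ {l : List V}, l.IsChain R → ∀ e ∈ pathEdges l, R e.1 e.2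
  | _, .nil, _, he => by simp [pathEdges] at he
  | _, .singleton _, _, he => by simp [pathEdges] at he
  | _, .cons_cons hr h, e, he => by
      rcases List.mem_cons.mp he with rfl | he
      · exact hr
      · exact h.rel_of_mem_pathEdges e he

theorem List.IsPrefix.pathEdges {l₁ l₂ : List V} (h : l₁ <+: l₂) :
    pathEdges l₁ <+: pathEdges l₂ := by
  obtain ⟨r, rfl⟩ := h
  induction l₁ with
  | nil => exact List.nil_prefix
  | cons x l ih =>
    cases l with
    | nil => exact List.nil_prefix
    | cons y l => simpa using ih

theorem pathEdges_concat {u : V} (v : V) : ∀ {l : List V}, l.getLast? = some u →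
    pathEdges (l ++ [v]) = pathEdges l ++ [(u, v)]
  | [x], h => by simp_all [pathEdges]
  | x :: y :: l, h => by
      rw [List.getLast?_cons_cons] at h
      simpa using congrArg (List.cons (x, y)) (pathEdges_concat v h)

theorem exists_mem_pathEdges_leaving (p : V → Prop) {a b : V} (ha : p a) (hb : ¬ p b) :
    ∀ {l : List V}, l.head? = some a → l.getLast? = some b →
      ∃ e ∈ pathEdges l, p e.1 ∧ ¬ p e.2
  | [x], hx, hl => by simp_all
  | x :: y :: l, hx, hl => by
      obtain rfl : x = a := by simpa using hx
      by_cases hy : p y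
      · obtain ⟨e, he, hpe⟩ :=
          exists_mem_pathEdges_leaving p hy hb (l := y :: l) rfl (by simpa using hl)
        exact ⟨e, by simp [he], hpe⟩
      · exact ⟨(x, y), by simp, ha, hy⟩

end PathEdges

section Rainbow

variable {V : Type*} {N m : ℕ}

-- The edge colouring is recorded as the list `cs` of colours along `Q`; injectivity is `cs.Nodup`.
def IsRainbow_s7 (P : Fin N → List V) (c : Fin N → Fin m) (X : Finset (Fin m)) (Q : List V) :
    Prop :=
  ∃ cs : List (Fin m), cs.Nodup ∧ (∀ i ∈ cs, i ∈ X) ∧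
    (pathEdges Q).Forall₂ (fun e i => ∃ j, c j = i ∧ e ∈ pathEdges (P j)) cs

def RainbowReachable (E : V → V → Prop) (s : V) (P : Fin N → List V) (c : Fin N → Fin m)
    (X : Finset (Fin m)) (v : V) : Prop :=
  ∃ Q : List V, IsPath E s v Q ∧ IsRainbow_s7 P c X Q

variable {E : V → V → Prop} {s u v : V} {P : Fin N → List V} {c : Fin N → Fin m}
  {X Y : Finset (Fin m)} {Q Q' : List V}

theorem IsPath.concat (hQ : IsPath E s u Q) (hv : v ∉ Q) (huv : E u v) :
    IsPath E s v (Q ++ [v]) := by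
  obtain ⟨hnd, hh, hl, hc⟩ := hQ
  have hne : Q ≠ [] := by rintro rfl; simp at hh
  refine ⟨hnd.append (List.nodup_singleton v) (by simpa using hv), ?_, by simp, ?_⟩
  · rwa [List.head?_append_of_ne_nil _ hne]
  · refine List.IsChain.append hc (List.isChain_singleton v) ?_
    intro x hx y hy
    obtain rfl : x = u := by simp_all
    obtain rfl : v = y := by simpa using hy
    exact huv

theorem IsPath.exists_prefix (hQ : IsPath E s u Q) (hv : v ∈ Q) :
    ∃ Q', Q' <+: Q ∧ IsPath E s v Q' := by
  obtain ⟨hnd, hh, -, hc⟩ := hQ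
  obtain ⟨l, r, rfl⟩ := List.mem_iff_append.mp hv
  have hpre : l ++ [v] <+: l ++ v :: r := ⟨r, by simp⟩
  exact ⟨l ++ [v], hpre, hnd.sublist hpre.sublist, by simpa using hh, by simp,
    List.IsChain.prefix hc hpre⟩

theorem IsRainbow_s7.mono (h : IsRainbow_s7 P c X Q) (hXY : X ⊆ Y) : IsRainbow_s7 P c Y Q := by
  obtain ⟨cs, hnd, hX, hrel⟩ := h
  exact ⟨cs, hnd, fun i hi => hXY (hX i hi), hrel⟩

theorem isRainbow_singleton : IsRainbow_s7 P c X [v] :=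
  ⟨[], List.nodup_nil, by simp, by simp [pathEdges]⟩

theorem IsRainbow_s7.of_prefix (h : IsRainbow_s7 P c X Q) (hQ' : Q' <+: Q) : IsRainbow_s7 P c X Q' := by
  obtain ⟨cs, hnd, hX, hrel⟩ := h
  have htake := List.prefix_iff_eq_take.mp hQ'.pathEdges
  refine ⟨cs.take (pathEdges Q').length, hnd.sublist (List.take_sublist _ _),
    fun i hi => hX i (List.mem_of_mem_take hi), ?_⟩
  have := List.forall₂_take (pathEdges Q').length hrel
  rwa [← htake] at this

theorem IsRainbow_s7.concat {j : Fin N} (h : IsRainbow_s7 P c X Q) (hu : Q.getLast? = some u)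
    (huv : (u, v) ∈ pathEdges (P j)) (hj : c j ∉ X) :
    IsRainbow_s7 P c (insert (c j) X) (Q ++ [v]) := by
  obtain ⟨cs, hnd, hX, hrel⟩ := h
  refine ⟨cs ++ [c j], hnd.append (List.nodup_singleton _) ?_, ?_, ?_⟩
  · simpa using fun hmem => hj (hX _ hmem)
  · simp only [List.mem_append, List.mem_singleton, Finset.mem_insert]
    rintro i (hi | rfl)
    · exact Or.inr (hX i hi)
    · exact Or.inl rfl
  · rw [pathEdges_concat v hu]
    exact List.rel_append hrel (.cons ⟨j, rfl, huv⟩ .nil)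

theorem IsRainbow_s7.multicoloredCl (h : IsRainbow_s7 P c X Q) : MulticoloredCl P c Q := by
  obtain ⟨cs, hnd, -, hrel⟩ := h
  have hlen := hrel.length_eq
  refine ⟨fun e => cs.get (e.cast hlen), fun e e' he => ?_, fun e => hrel.get e.2 _⟩
  exact Fin.cast_injective hlen (hnd.get_inj_iff.mp he)

theorem RainbowReachable.mono (h : RainbowReachable E s P c X v) (hXY : X ⊆ Y) :
    RainbowReachable E s P c Y v :=
  let ⟨Q, hQ, hR⟩ := h
  ⟨Q, hQ, hR.mono hXY⟩

theorem rainbowReachable_self : RainbowReachable E s P c X s :=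
  ⟨[s], ⟨List.nodup_singleton s, rfl, rfl, List.isChain_singleton s⟩, isRainbow_singleton⟩

theorem RainbowReachable.of_mem (hQ : IsPath E s u Q) (hR : IsRainbow_s7 P c X Q) (hv : v ∈ Q) :
    RainbowReachable E s P c X v :=
  let ⟨Q', hpre, hQ'⟩ := hQ.exists_prefix hv
  ⟨Q', hQ', hR.of_prefix hpre⟩

theorem RainbowReachable.step {j : Fin N} (hu : RainbowReachable E s P c X u)
    (hPj : (P j).IsChain E) (huv : (u, v) ∈ pathEdges (P j)) (hj : c j ∉ X) :
    RainbowReachable E s P c (insert (c j) X) v := by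
  obtain ⟨Q, hQ, hR⟩ := hu
  by_cases hvQ : v ∈ Q
  · exact (RainbowReachable.of_mem hQ hR hvQ).mono (Finset.subset_insert _ _)
  · exact ⟨Q ++ [v], hQ.concat hvQ (List.IsChain.rel_of_mem_pathEdges hPj _ huv),
      hR.concat hQ.2.2.1 huv hj⟩

theorem exists_inner_vertex_rainbowReachable_insert {t : V} {j : Fin N}
    (hPj : IsPath E s t (P j)) (hj : c j ∉ X)
    (ht : ¬ RainbowReachable E s P c (insert (c j) X) t) :
    ∃ v ∈ P j, v ≠ s ∧ v ≠ t ∧ ¬ RainbowReachable E s P c X v ∧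
      RainbowReachable E s P c (insert (c j) X) v := by
  obtain ⟨-, hh, hl, hc⟩ := hPj
  obtain ⟨⟨u, v⟩, huv, hu, hv⟩ := exists_mem_pathEdges_leaving (RainbowReachable E s P c X ·)
    rainbowReachable_self (fun h => ht (h.mono (Finset.subset_insert _ _))) hh hl
  have hreach := hu.step hc huv hj
  exact ⟨v, snd_mem_of_mem_pathEdges huv, fun h => hv (h ▸ rainbowReachable_self),
    fun h => ht (h ▸ hreach), hv, hreach⟩

end Rainbow

section Counting

open Finset

variable {V : Type*} [Fintype V] {N m : ℕ} {E : V → V → Prop} {s t : V}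
  {P : Fin N → List V} {c : Fin N → Fin m}

open Classical in
noncomputable def rainbowReachableSet (E : V → V → Prop) (s : V) (P : Fin N → List V)
    (c : Fin N → Fin m) (X : Finset (Fin m)) : Finset V :=
  {v | RainbowReachable E s P c X v}

@[simp]
theorem mem_rainbowReachableSet {X : Finset (Fin m)} {v : V} :
    v ∈ rainbowReachableSet E s P c X ↔ RainbowReachable E s P c X v := by
  simp [rainbowReachableSet]

theorem rainbowReachableSet_mono {X Y : Finset (Fin m)} (hXY : X ⊆ Y) :
    rainbowReachableSet E s P c X ⊆ rainbowReachableSet E s P c Y :=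
  fun _ hv => mem_rainbowReachableSet.mpr ((mem_rainbowReachableSet.mp hv).mono hXY)

theorem card_rainbowReachableSet_add_card_color_le
    (hP : ∀ i, IsPath E s t (P i))
    (hdisj : ∀ i j, i ≠ j → c i = c j → InnerlyDisjoint s t (P i) (P j))
    {X : Finset (Fin m)} {a : Fin m} (ha : a ∉ X)
    (ht : ¬ RainbowReachable E s P c (insert a X) t) :
    #(rainbowReachableSet E s P c X) + #{j | c j = a} ≤
      #(rainbowReachableSet E s P c (insert a X)) := by
  classical
  have : Nonempty V := ⟨s⟩
  have hnew : ∀ j, c j = a → ∃ v ∈ P j, v ≠ s ∧ v ≠ t ∧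
      ¬ RainbowReachable E s P c X v ∧ RainbowReachable E s P c (insert a X) v := by
    rintro j rfl
    exact exists_inner_vertex_rainbowReachable_insert (hP j) ha ht
  choose! f hfP hfs hft hfX hfX' using hnew
  have hinj : Set.InjOn f {j | c j = a} := by
    intro j (hj : c j = a) k (hk : c k = a) hjk
    by_contra hne
    rcases hdisj j k hne (hj.trans hk.symm) (f j) (hfP j hj) (hjk ▸ hfP k hk) with h | h
    exacts [hfs j hj h, hft j hj h]
  rw [← card_sdiff_add_card_eq_card (rainbowReachableSet_mono (subset_insert a X)), add_comm]
  refine Nat.add_le_add_right (card_le_card_of_injOn f (fun j hj => ?_) (by simpa using hinj)) _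
  replace hj : c j = a := by simpa using hj
  simp only [coe_sdiff, Set.mem_sdiff, mem_coe, mem_rainbowReachableSet]
  exact ⟨hfX' j hj, hfX j hj⟩

theorem card_color_mem_lt_card_rainbowReachableSet
    (hP : ∀ i, IsPath E s t (P i))
    (hdisj : ∀ i j, i ≠ j → c i = c j → InnerlyDisjoint s t (P i) (P j))
    (X : Finset (Fin m)) (ht : ¬ RainbowReachable E s P c X t) :
    #{j | c j ∈ X} < #(rainbowReachableSet E s P c X) := by
  classical
  induction X using Finset.induction_on with
  | empty =>
    simpa using card_pos.mpr ⟨s, mem_rainbowReachableSet.mpr rainbowReachable_self⟩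
  | insert a X ha ih =>
    have hsplit : #{j | c j ∈ insert a X} = #{j | c j = a} + #{j | c j ∈ X} := by
      rw [← card_union_of_disjoint (disjoint_filter.mpr fun j _ (h : c j = a) h' => ha (h ▸ h'))]
      congr 1
      ext j
      simp
    have hstep := card_rainbowReachableSet_add_card_color_le hP hdisj ha ht
    have hX := ih fun h => ht (h.mono (subset_insert a X))
    omega

end Counting

theorem sink_reachable_general {V : Type*} [Fintype V] (E : V → V → Prop) (s t : V)
    {N m : ℕ} (P : Fin N → List V) (c : Fin N → Fin m)
    (hP : ∀ i, IsPath E s t (P i))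
    (hdisj : ∀ i j, i ≠ j → c i = c j → InnerlyDisjoint s t (P i) (P j))
    (hbig : Fintype.card V - 2 < N) :
    ∃ Q : List V, IsPath E s t Q ∧ MulticoloredCl P c Q := by
  classical
  by_contra hno
  have ht : ¬ RainbowReachable E s P c Finset.univ t :=
    fun ⟨Q, hQ, hR⟩ => hno ⟨Q, hQ, hR.multicoloredCl⟩
  have hcount := card_color_mem_lt_card_rainbowReachableSet hP hdisj Finset.univ ht
  have hsub : rainbowReachableSet E s P c Finset.univ ⊆ Finset.univ.erase t :=
    fun v hv => Finset.mem_erase.mpr ⟨fun h => ht (h ▸ mem_rainbowReachableSet.mp hv), by simp⟩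
  have hcard := Finset.card_le_card hsub
  simp only [Finset.mem_univ, Finset.filter_true, Finset.card_univ, Fintype.card_fin,
    Finset.card_erase_of_mem] at hcount hcard
  omega

/-- In a network `(D, s, t)`, given `L = (P_1, …, P_m)` where each `P_i` is a finite set of
pairwise innerly disjoint `s`–`t` paths (here: `N` paths `P` colored by `c : Fin N → Fin m`,
paths of the same color being distinct and pairwise innerly disjoint), if the total number
of paths exceeds `|V| - 2`, then `t` is reachable: there is an `L`-multicolored `s`–`t` path. -/
theorem sink_reachable {V : Type*} [Fintype V] (E : V → V → Prop) (s t : V) (hst : s ≠ t)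
    (hs : ∀ u v, E u v → v ≠ s) (ht : ∀ u v, E u v → u ≠ t)
    {N m : ℕ} (P : Fin N → List V) (c : Fin N → Fin m)
    (hP : ∀ i, IsPath E s t (P i))
    (hset : ∀ i j, i ≠ j → c i = c j → P i ≠ P j)
    (hdisj : ∀ i j, i ≠ j → c i = c j → InnerlyDisjoint s t (P i) (P j))
    (hbig : Fintype.card V - 2 < N) :
    ∃ Q : List V, IsPath E s t Q ∧ MulticoloredCl P c Q :=
  sink_reachable_general E s t P c hP hdisj hbig
end

section
/- If G and H are matchings in a (simple) graph with |H| = |G| + q for some q ≥ 0, then the union H ∪ G contains at least q pairwise vertex-disjoint augmenting G-alternating paths. Formally: there exist q paths in the graph whose edge sets lie in H ∪ G, which are pairwise vertex-disjoint, and each of which is an augmenting G-alternating path. -/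
/-- The (undirected) edges of a path given as a list of vertices. -/
def sym2Edges {V : Type*} (l : List V) : List (Sym2 V) :=
  (l.zip l.tail).map (fun e => s(e.1, e.2))

/-- A matching in a simple graph `Γ`: a set of edges of `Γ` no two of which share a vertex. -/
def IsGraphMatching {V : Type*} (Γ : SimpleGraph V) (M : Finset (Sym2 V)) : Prop :=
  (∀ e ∈ M, e ∈ Γ.edgeSet) ∧ ∀ e ∈ M, ∀ f ∈ M, e ≠ f → ∀ v : V, v ∈ e → v ∉ f

/-- A path (list of vertices) is `F`-alternating if of every two consecutive edges exactly
one belongs to `F`. -/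
def IsAlternating {V : Type*} (F : Finset (Sym2 V)) (l : List V) : Prop :=
  (sym2Edges l).Chain' (fun e₁ e₂ => (e₁ ∈ F ↔ e₂ ∉ F))

/-- An `F`-alternating path is augmenting if it has at least one edge and its first and last
vertices belong to no edge of `F`. -/
def IsAugmenting {V : Type*} (F : Finset (Sym2 V)) (l : List V) : Prop :=
  2 ≤ l.length ∧ IsAlternating F l ∧
    (∀ v, l.head? = some v → ∀ e ∈ F, v ∉ e) ∧
    (∀ v, l.getLast? = some v → ∀ e ∈ F, v ∉ e)

/-!
Induction on `G`, maintaining a family `S` of pairwise vertex-disjoint augmenting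
`G`-alternating paths in `H ∪ G` with `|H| ≤ |G| + |S|`. For `G = ∅` the edges of `H` are
such paths. When an edge `s(y, z)` is added to `G`, its ends were `G`-free, so they can only be
endpoints of paths of `S`. If they end two different paths, these are joined through
`s(y, z)` into one augmenting path; otherwise at most one path meets `{y, z}` and it is
dropped. Either way `|S|` decreases by at most one.
-/

open Finset

section Sym2Edges

variable {V : Type*}

@[simp] lemma sym2Edges_singleton (a : V) : sym2Edges [a] = [] := rfl

@[simp] lemma sym2Edges_cons_cons (a b : V) (l : List V) :
    sym2Edges (a :: b :: l) = s(a, b) :: sym2Edges (b :: l) := rfl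

lemma mem_of_mem_sym2Edges {l : List V} {e : Sym2 V} (he : e ∈ sym2Edges l) {v : V}
    (hv : v ∈ e) : v ∈ l := by
  obtain ⟨⟨a, b⟩, hab, rfl⟩ := List.mem_map.1 he
  obtain ⟨ha, hb⟩ := List.of_mem_zip hab
  rcases Sym2.mem_iff.1 hv with rfl | rfl
  · exact ha
  · exact List.mem_of_mem_tail hb

lemma ne_of_mem_sym2Edges {l : List V} {e f : Sym2 V} {v : V} (hf : f ∈ sym2Edges l)
    (hv : v ∈ e) (hvl : v ∉ l) : f ≠ e := by
  rintro rfl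
  exact hvl (mem_of_mem_sym2Edges hf hv)

lemma sym2Edges_append_cons (l₁ : List V) (a : V) (l₂ : List V) :
    sym2Edges (l₁ ++ a :: l₂) = sym2Edges (l₁ ++ [a]) ++ sym2Edges (a :: l₂) := by
  induction l₁ with
  | nil => simp
  | cons b t ih =>
    cases t with
    | nil => simp
    | cons c t => simpa using ih

lemma sym2Edges_append_of_getLast?_of_head? {l₁ l₂ : List V} {y z : V}
    (hy : l₁.getLast? = some y) (hz : l₂.head? = some z) :
    sym2Edges (l₁ ++ l₂) = sym2Edges l₁ ++ s(y, z) :: sym2Edges l₂ := by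
  obtain ⟨L₁, rfl⟩ := List.getLast?_eq_some_iff.1 hy
  obtain ⟨L₂, rfl⟩ := List.head?_eq_some_iff.1 hz
  rw [List.append_assoc, List.singleton_append, sym2Edges_append_cons, sym2Edges_cons_cons]

lemma sym2Edges_reverse (l : List V) : sym2Edges l.reverse = (sym2Edges l).reverse := by
  induction l with
  | nil => rfl
  | cons a t ih =>
    cases t with
    | nil => rfl
    | cons c t =>
      rw [List.reverse_cons, List.reverse_cons, List.append_assoc, List.singleton_append,
        sym2Edges_append_cons, ← List.reverse_cons, ih]
      simp [Sym2.eq_swap]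

lemma mem_of_mem_head?_sym2Edges {l : List V} {u : V} {f : Sym2 V} (hu : l.head? = some u)
    (hf : f ∈ (sym2Edges l).head?) : u ∈ f := by
  match l with
  | a :: b :: t =>
    simp only [List.head?_cons, Option.some_inj, sym2Edges_cons_cons, Option.mem_def] at hu hf
    simp [← hu, ← hf]
  | [_] => simp at hf

lemma mem_of_mem_getLast?_sym2Edges {l : List V} {u : V} {f : Sym2 V}
    (hu : l.getLast? = some u) (hf : f ∈ (sym2Edges l).getLast?) : u ∈ f := by
  rw [← List.head?_reverse] at hu
  rw [← List.head?_reverse, ← sym2Edges_reverse] at hf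
  exact mem_of_mem_head?_sym2Edges hu hf

lemma isChain_adj_of_forall_mem_sym2Edges {Γ : SimpleGraph V} {l : List V}
    (h : ∀ e ∈ sym2Edges l, e ∈ Γ.edgeSet) : l.IsChain Γ.Adj := by
  induction l with
  | nil => exact List.isChain_nil
  | cons a t ih =>
    cases t with
    | nil => exact List.isChain_singleton a
    | cons b t =>
      simp only [sym2Edges_cons_cons, List.forall_mem_cons] at h
      exact List.isChain_cons_cons.2 ⟨h.1, ih h.2⟩

end Sym2Edges

lemma List.Nodup.head?_ne_getLast? {V : Type*} {l : List V} (hl : l.Nodup) (hlen : 2 ≤ l.length)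
    {u w : V} (hu : l.head? = some u) (hw : l.getLast? = some w) : u ≠ w := by
  match l with
  | a :: b :: t =>
    simp only [List.head?_cons, Option.some_inj] at hu
    rw [List.getLast?_cons_cons] at hw
    rintro rfl
    exact (List.nodup_cons.1 hl).1 (hu ▸ List.mem_of_mem_getLast? hw)

section Alternating

variable {V : Type*} {F F' : Finset (Sym2 V)} {l l₁ l₂ : List V}

lemma IsAlternating.congr (h : ∀ f ∈ sym2Edges l, f ∈ F ↔ f ∈ F') (hl : IsAlternating F l) :
    IsAlternating F' l :=
  hl.imp_of_mem_imp fun a b ha hb hab => by rw [← h a ha, ← h b hb]; exact hab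

lemma IsAlternating.reverse (hl : IsAlternating F l) : IsAlternating F l.reverse := by
  unfold IsAlternating at *
  rw [sym2Edges_reverse, List.Chain', List.isChain_reverse]
  exact hl.imp fun hab => by tauto

lemma IsAlternating.append {y z : V} (h₁ : IsAlternating F l₁) (h₂ : IsAlternating F l₂)
    (hy : l₁.getLast? = some y) (hz : l₂.head? = some z) (hyz : s(y, z) ∈ F)
    (hlast : ∀ f ∈ (sym2Edges l₁).getLast?, f ∉ F) (hhead : ∀ f ∈ (sym2Edges l₂).head?, f ∉ F) :
    IsAlternating F (l₁ ++ l₂) := by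
  unfold IsAlternating at *
  rw [sym2Edges_append_of_getLast?_of_head? hy hz, List.Chain', List.isChain_append,
    List.isChain_cons]
  exact ⟨h₁, ⟨fun f hf => iff_of_true hyz (hhead f hf), h₂⟩,
    fun f hf g hg => by cases hg; exact iff_of_false (hlast f hf) (not_not_intro hyz)⟩

lemma IsAlternating.head?_eq_or_getLast?_eq_of_free {v : V} (hl : IsAlternating F l) (hv : v ∈ l)
    (hfree : ∀ f ∈ F, v ∉ f) : l.head? = some v ∨ l.getLast? = some v := by
  induction l with
  | nil => simp at hv
  | cons a t ih =>
    rcases List.mem_cons.1 hv with rfl | hvt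
    · exact Or.inl rfl
    cases t with
    | nil => simp at hvt
    | cons b t =>
      unfold IsAlternating at hl
      rw [sym2Edges_cons_cons, List.Chain', List.isChain_cons] at hl
      rcases ih hl.2 hvt with hb | hlast
      · cases t with
        | nil => exact Or.inr (by simpa using hb)
        | cons c t =>
          simp only [List.head?_cons, Option.some_inj] at hb
          subst hb
          by_cases hab : s(a, b) ∈ F
          · exact absurd (Sym2.mem_mk_right a b) (hfree _ hab)
          · exact absurd (Sym2.mem_mk_left b c) (hfree _ (by simpa [hab] using hl.1))
      · exact Or.inr (by rwa [List.getLast?_cons_cons])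

lemma IsAugmenting.reverse (hl : IsAugmenting F l) : IsAugmenting F l.reverse :=
  ⟨by simpa using hl.1, hl.2.1.reverse, by rw [List.head?_reverse]; exact hl.2.2.2,
    by rw [List.getLast?_reverse]; exact hl.2.2.1⟩

end Alternating

section AugmentingPath

variable {V : Type*} [DecidableEq V]

structure IsAugmentingPathIn (H G : Finset (Sym2 V)) (P : List V) : Prop where
  nodup : P.Nodup
  edges_subset : ∀ e ∈ sym2Edges P, e ∈ H ∪ G
  isAugmenting : IsAugmenting G P

variable {H G : Finset (Sym2 V)} {P P₁ P₂ : List V}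

lemma forall_notMem_insert_mk {v y z : V} (hy : v ≠ y) (hz : v ≠ z) (hv : ∀ f ∈ G, v ∉ f) :
    ∀ f ∈ insert s(y, z) G, v ∉ f :=
  (forall_mem_insert _ _ _).2 ⟨by simp [Sym2.mem_iff, hy, hz], hv⟩

namespace IsAugmentingPathIn

lemma reverse (hP : IsAugmentingPathIn H G P) : IsAugmentingPathIn H G P.reverse where
  nodup := List.nodup_reverse.2 hP.nodup
  edges_subset e he := hP.edges_subset e (by simpa [sym2Edges_reverse] using he)
  isAugmenting := hP.isAugmenting.reverse

lemma exists_getLast?_eq {v : V} (hP : IsAugmentingPathIn H G P) (hv : v ∈ P)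
    (hfree : ∀ f ∈ G, v ∉ f) :
    ∃ Q, (∀ u, u ∈ Q ↔ u ∈ P) ∧ IsAugmentingPathIn H G Q ∧ Q.getLast? = some v := by
  rcases hP.isAugmenting.2.1.head?_eq_or_getLast?_eq_of_free hv hfree with h | h
  · exact ⟨P.reverse, fun u => List.mem_reverse, hP.reverse, by rwa [List.getLast?_reverse]⟩
  · exact ⟨P, fun u => Iff.rfl, hP, h⟩

lemma insert_of_forall_notMem {e : Sym2 V} (hP : IsAugmentingPathIn H G P)
    (he : ∀ v ∈ e, v ∉ P) : IsAugmentingPathIn H (insert e G) P where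
  nodup := hP.nodup
  edges_subset f hf := union_subset_union_right (subset_insert e G) (hP.edges_subset f hf)
  isAugmenting := by
    obtain ⟨hlen, halt, hhead, hlast⟩ := hP.isAugmenting
    refine ⟨hlen, halt.congr fun f hf => ?_, ?_, ?_⟩
    · simp [ne_of_mem_sym2Edges hf e.out_fst_mem (he _ e.out_fst_mem)]
    · exact fun v hv => forall_mem_insert _ _ _ |>.2
        ⟨fun hve => he v hve (List.mem_of_mem_head? hv), hhead v hv⟩
    · exact fun v hv => forall_mem_insert _ _ _ |>.2
        ⟨fun hve => he v hve (List.mem_of_mem_getLast? hv), hlast v hv⟩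

lemma append {y z : V} (h₁ : IsAugmentingPathIn H G P₁) (h₂ : IsAugmentingPathIn H G P₂)
    (hdisj : P₁.Disjoint P₂) (hy : P₁.getLast? = some y) (hz : P₂.head? = some z) :
    IsAugmentingPathIn H (insert s(y, z) G) (P₁ ++ P₂) where
  nodup := List.nodup_append.2 ⟨h₁.nodup, h₂.nodup, fun _ ha _ hb hab => hdisj ha (hab ▸ hb)⟩
  edges_subset f hf := by
    rw [sym2Edges_append_of_getLast?_of_head? hy hz] at hf
    simp only [List.mem_append, List.mem_cons] at hf
    rcases hf with hf | rfl | hf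
    · exact union_subset_union_right (subset_insert _ G) (h₁.edges_subset f hf)
    · exact mem_union_right _ (mem_insert_self _ G)
    · exact union_subset_union_right (subset_insert _ G) (h₂.edges_subset f hf)
  isAugmenting := by
    obtain ⟨hlen₁, halt₁, hhead₁, hlast₁⟩ := h₁.isAugmenting
    obtain ⟨hlen₂, halt₂, hhead₂, hlast₂⟩ := h₂.isAugmenting
    have hyP₁ : y ∈ P₁ := List.mem_of_mem_getLast? hy
    have hzP₂ : z ∈ P₂ := List.mem_of_mem_head? hz
    have hz₁ : z ∉ P₁ := fun h => hdisj h hzP₂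
    have hy₂ : y ∉ P₂ := fun h => hdisj hyP₁ h
    have hG₁ : ∀ f ∈ sym2Edges P₁, f ∈ insert s(y, z) G ↔ f ∈ G := fun f hf => by
      simp [ne_of_mem_sym2Edges hf (Sym2.mem_mk_right y z) hz₁]
    have hG₂ : ∀ f ∈ sym2Edges P₂, f ∈ insert s(y, z) G ↔ f ∈ G := fun f hf => by
      simp [ne_of_mem_sym2Edges hf (Sym2.mem_mk_left y z) hy₂]
    refine ⟨by simp; omega, (halt₁.congr fun f hf => (hG₁ f hf).symm).append
      (halt₂.congr fun f hf => (hG₂ f hf).symm) hy hz (mem_insert_self _ G) ?_ ?_, ?_, ?_⟩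
    · intro f hf
      rw [hG₁ f (List.mem_of_mem_getLast? hf)]
      exact fun hfG => hlast₁ y hy f hfG (mem_of_mem_getLast?_sym2Edges hy hf)
    · intro f hf
      rw [hG₂ f (List.mem_of_mem_head? hf)]
      exact fun hfG => hhead₂ z hz f hfG (mem_of_mem_head?_sym2Edges hz hf)
    · intro v hv
      rw [List.head?_append_of_ne_nil _ (List.ne_nil_of_mem hyP₁)] at hv
      exact forall_notMem_insert_mk (h₁.nodup.head?_ne_getLast? hlen₁ hv hy)
        (fun h => hz₁ (h ▸ List.mem_of_mem_head? hv)) (hhead₁ v hv)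
    · intro v hv
      rw [List.getLast?_append_of_ne_nil _ (List.ne_nil_of_mem hzP₂)] at hv
      exact forall_notMem_insert_mk (fun h => hy₂ (h ▸ List.mem_of_mem_getLast? hv))
        (h₂.nodup.head?_ne_getLast? hlen₂ hz hv).symm (hlast₂ v hv)

end IsAugmentingPathIn

end AugmentingPath

section AugmentingFamily

variable {V : Type*} [DecidableEq V]

structure IsAugmentingFamily (H G : Finset (Sym2 V)) (S : Finset (List V)) : Prop where
  isAugmentingPathIn : ∀ P ∈ S, IsAugmentingPathIn H G P
  pairwise_disjoint : (S : Set (List V)).Pairwise List.Disjoint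

variable {H G : Finset (Sym2 V)} {S : Finset (List V)} {y z : V}

namespace IsAugmentingFamily

lemma eq_of_mem_of_mem (hS : IsAugmentingFamily H G S) {P Q : List V} {v : V} (hP : P ∈ S)
    (hQ : Q ∈ S) (hvP : v ∈ P) (hvQ : v ∈ Q) : P = Q :=
  by_contra fun hne => hS.pairwise_disjoint hP hQ hne hvP hvQ

lemma filter_notMem (hS : IsAugmentingFamily H G S) :
    IsAugmentingFamily H (insert s(y, z) G) {P ∈ S | y ∉ P ∧ z ∉ P} where
  isAugmentingPathIn P hP := by
    obtain ⟨hPS, hyP, hzP⟩ := mem_filter.1 hP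
    exact (hS.isAugmentingPathIn P hPS).insert_of_forall_notMem
      fun v hv => by rcases Sym2.mem_iff.1 hv with rfl | rfl <;> assumption
  pairwise_disjoint := hS.pairwise_disjoint.mono (coe_subset.2 (filter_subset _ S))

lemma exists_join (hS : IsAugmentingFamily H G S) (hy : ∀ f ∈ G, y ∉ f) (hz : ∀ f ∈ G, z ∉ f)
    {P₁ P₂ : List V} (h₁ : P₁ ∈ S) (h₂ : P₂ ∈ S) (hne : P₁ ≠ P₂) (hy₁ : y ∈ P₁)
    (hz₂ : z ∈ P₂) : ∃ S', IsAugmentingFamily H (insert s(y, z) G) S' ∧ #S ≤ #S' + 1 := by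
  obtain ⟨Q₁, hQP₁, hQ₁, hQ₁y⟩ := (hS.isAugmentingPathIn P₁ h₁).exists_getLast?_eq hy₁ hy
  obtain ⟨Q₂, hQP₂, hQ₂, hQ₂z⟩ := (hS.isAugmentingPathIn P₂ h₂).exists_getLast?_eq hz₂ hz
  have hdisj : P₁.Disjoint P₂ := hS.pairwise_disjoint h₁ h₂ hne
  have hmem : ∀ u, u ∈ Q₁ ++ Q₂.reverse ↔ u ∈ P₁ ∨ u ∈ P₂ := by simp [hQP₁, hQP₂]
  have hsplit := card_filter_add_card_filter_not (s := S) fun P => y ∉ P ∧ z ∉ P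
  set S₀ := {P ∈ S | y ∉ P ∧ z ∉ P}
  have hS₀ : IsAugmentingFamily H (insert s(y, z) G) S₀ := hS.filter_notMem
  have hdisj₀ : ∀ P ∈ S₀, (Q₁ ++ Q₂.reverse).Disjoint P := by
    intro P hP u hu huP
    obtain ⟨hPS, hyP, hzP⟩ := mem_filter.1 hP
    rcases (hmem u).1 hu with hu | hu
    · exact hS.pairwise_disjoint h₁ hPS (by rintro rfl; exact hyP hy₁) hu huP
    · exact hS.pairwise_disjoint h₂ hPS (by rintro rfl; exact hzP hz₂) hu huP
  refine ⟨insert (Q₁ ++ Q₂.reverse) S₀, ⟨?_, ?_⟩, ?_⟩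
  · refine (forall_mem_insert _ _ _).2 ⟨hQ₁.append hQ₂.reverse ?_ hQ₁y ?_, hS₀.1⟩
    · exact fun u hu₁ hu₂ => hdisj ((hQP₁ u).1 hu₁) ((hQP₂ u).1 (List.mem_reverse.1 hu₂))
    · rwa [List.head?_reverse]
  · rw [coe_insert, Set.pairwise_insert]
    exact ⟨hS₀.2, fun P hP _ => ⟨hdisj₀ P hP, (hdisj₀ P hP).symm⟩⟩
  · have hnew : Q₁ ++ Q₂.reverse ∉ S₀ := fun h => (mem_filter.1 h).2.1 ((hmem y).2 (.inl hy₁))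
    have hrest : #{P ∈ S | ¬(y ∉ P ∧ z ∉ P)} ≤ 2 := by
      refine (card_le_card (t := {P₁, P₂}) fun P hP => ?_).trans card_le_two
      obtain ⟨hPS, hP⟩ := mem_filter.1 hP
      rcases not_and_or.1 hP with hyP | hzP
      · exact mem_insert.2 (.inl (hS.eq_of_mem_of_mem hPS h₁ (not_not.1 hyP) hy₁))
      · exact mem_insert_of_mem (mem_singleton.2 (hS.eq_of_mem_of_mem hPS h₂ (not_not.1 hzP) hz₂))
    rw [card_insert_of_notMem hnew]
    omega

lemma exists_insert (hS : IsAugmentingFamily H G S) (hy : ∀ f ∈ G, y ∉ f)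
    (hz : ∀ f ∈ G, z ∉ f) :
    ∃ S', IsAugmentingFamily H (insert s(y, z) G) S' ∧ #S ≤ #S' + 1 := by
  by_cases hjoin : ∃ P₁ ∈ S, ∃ P₂ ∈ S, y ∈ P₁ ∧ z ∈ P₂ ∧ P₁ ≠ P₂
  · obtain ⟨P₁, h₁, P₂, h₂, hy₁, hz₂, hne⟩ := hjoin
    exact hS.exists_join hy hz h₁ h₂ hne hy₁ hz₂
  push Not at hjoin
  refine ⟨_, hS.filter_notMem, ?_⟩
  have hrest : #{P ∈ S | ¬(y ∉ P ∧ z ∉ P)} ≤ 1 := by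
    refine card_le_one.2 fun P hP Q hQ => ?_
    obtain ⟨hPS, hP⟩ := mem_filter.1 hP
    obtain ⟨hQS, hQ⟩ := mem_filter.1 hQ
    simp only [not_and_or, not_not] at hP hQ
    rcases hP with hyP | hzP <;> rcases hQ with hyQ | hzQ
    · exact hS.eq_of_mem_of_mem hPS hQS hyP hyQ
    · exact hjoin P hPS Q hQS hyP hzQ
    · exact (hjoin Q hQS P hPS hyQ hzP).symm
    · exact hS.eq_of_mem_of_mem hPS hQS hzP hzQ
  have := card_filter_add_card_filter_not (s := S) fun P => y ∉ P ∧ z ∉ P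
  omega

end IsAugmentingFamily

end AugmentingFamily

section Matching

variable {V : Type*} {Γ : SimpleGraph V} {G H : Finset (Sym2 V)}

lemma IsGraphMatching.subset (hH : IsGraphMatching Γ H) (h : G ⊆ H) : IsGraphMatching Γ G :=
  ⟨fun e he => hH.1 e (h he), fun e he f hf => hH.2 e (h he) f (h hf)⟩

variable [DecidableEq V]

lemma IsGraphMatching.forall_notMem_of_insert {e : Sym2 V} {v : V}
    (hG : IsGraphMatching Γ (insert e G)) (he : e ∉ G) (hv : v ∈ e) : ∀ f ∈ G, v ∉ f :=
  fun f hf => hG.2 e (mem_insert_self e G) f (mem_insert_of_mem hf) (fun h => he (h ▸ hf)) v hv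

lemma exists_isAugmentingFamily_empty (hH : IsGraphMatching Γ H) :
    ∃ S, IsAugmentingFamily H ∅ S ∧ #H ≤ #S := by
  let edgePath : Sym2 V → List V := fun e => [e.out.1, e.out.2]
  have hmk : ∀ e : Sym2 V, s(e.out.1, e.out.2) = e := Quot.out_eq
  have hmem : ∀ e u, u ∈ edgePath e → u ∈ e := by
    intro e u hu
    simp only [edgePath, List.mem_cons, List.not_mem_nil, or_false] at hu
    rcases hu with rfl | rfl
    exacts [e.out_fst_mem, e.out_snd_mem]
  refine ⟨H.image edgePath, ⟨?_, ?_⟩, ?_⟩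
  · simp only [forall_mem_image]
    intro e he
    have hne : e.out.1 ≠ e.out.2 := fun h =>
      Γ.not_isDiag_of_mem_edgeSet (hH.1 e he) (hmk e ▸ Sym2.mk_isDiag_iff.2 h)
    exact ⟨by simp [edgePath, hne], by simp [edgePath, hmk, he],
      ⟨by simp [edgePath], List.isChain_singleton _, by simp, by simp⟩⟩
  · rw [coe_image]
    rintro _ ⟨e, he, rfl⟩ _ ⟨f, hf, rfl⟩ hne u hue huf
    exact hH.2 e he f hf (fun h => hne (h ▸ rfl)) u (hmem e u hue) (hmem f u huf)
  · rw [card_image_of_injective]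
    intro e f h
    simp only [edgePath, List.cons.injEq, and_true] at h
    rw [← hmk e, ← hmk f, h.1, h.2]

theorem exists_isAugmentingFamily (hG : IsGraphMatching Γ G) (hH : IsGraphMatching Γ H) :
    ∃ S, IsAugmentingFamily H G S ∧ #H ≤ #G + #S := by
  induction G using Finset.induction_on with
  | empty => simpa using exists_isAugmentingFamily_empty hH
  | insert e G he ih =>
    induction e using Sym2.ind with
    | h y z =>
      obtain ⟨S, hS, hcard⟩ := ih (hG.subset (subset_insert _ G))
      obtain ⟨S', hS', hcard'⟩ := hS.exists_insert
        (hG.forall_notMem_of_insert he (Sym2.mem_mk_left y z))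
        (hG.forall_notMem_of_insert he (Sym2.mem_mk_right y z))
      exact ⟨S', hS', by rw [card_insert_of_notMem he]; omega⟩

end Matching

/-- If `G` and `H` are matchings in a simple graph with `|H| = |G| + q`, then `H ∪ G`
contains at least `q` pairwise vertex-disjoint augmenting `G`-alternating paths. -/
theorem augmenting_paths_of_card_diff {V : Type*} [DecidableEq V] (Γ : SimpleGraph V)
    (G H : Finset (Sym2 V)) (hG : IsGraphMatching Γ G) (hH : IsGraphMatching Γ H)
    (q : ℕ) (hq : H.card = G.card + q) :
    ∃ p : Fin q → List V,
      (∀ i, (p i).Nodup ∧ (p i).Chain' Γ.Adj) ∧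
      (∀ i, ∀ e ∈ sym2Edges (p i), e ∈ H ∪ G) ∧
      (∀ i j, i ≠ j → ∀ v ∈ p i, v ∉ p j) ∧
      (∀ i, IsAugmenting G (p i)) := by
  obtain ⟨S, hS, hcard⟩ := exists_isAugmentingFamily hG hH
  let p : Fin q ↪ S := (Fin.castLEEmb (by omega)).trans S.equivFin.symm.toEmbedding
  have hp : ∀ i, IsAugmentingPathIn H G (p i) := fun i => hS.isAugmentingPathIn _ (p i).2
  refine ⟨fun i => p i, fun i => ⟨(hp i).nodup, ?_⟩, fun i => (hp i).edges_subset,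
    fun i j hij => hS.pairwise_disjoint (p i).2 (p j).2
      (Subtype.coe_injective.ne (p.injective.ne hij)),
    fun i => (hp i).isAugmenting⟩
  refine isChain_adj_of_forall_mem_sym2Edges fun e he => ?_
  rcases mem_union.1 ((hp i).edges_subset e he) with heH | heG
  exacts [hH.1 e heH, hG.1 e heG]
end

section
/- Let n > 1 and let M_1, …, M_{2n−2} be matchings of size n in a bipartite graph that do not possess a rainbow matching of size n. Then there exists a matching of size n representing at least n − 1 of the matchings M_i, i.e., there exists a matching F of size n, a subset of n − 1 of its edges, and n − 1 distinct indices i_1, …, i_{n−1} such that the j-th chosen edge belongs to M_{i_j} for each j. -/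
section Drisko
variable {A B : Type*} [DecidableEq A] [DecidableEq B]

/-- A partial rainbow matching of size `k`: a set `S` of `k` indices and a choice
`f i ∈ M i` of edges for `i ∈ S`, pairwise disjoint. -/
def RB {m : ℕ} (M : Fin m → Finset (A × B)) (k : ℕ) : Prop :=
  ∃ (S : Finset (Fin m)) (f : Fin m → A × B), S.card = k ∧ (∀ i ∈ S, f i ∈ M i) ∧
    (∀ i ∈ S, ∀ i' ∈ S, (f i).1 = (f i').1 → i = i') ∧
    (∀ i ∈ S, ∀ i' ∈ S, (f i).2 = (f i').2 → i = i')

lemma RB_insert {m k : ℕ} (M : Fin m → Finset (A × B)) (S : Finset (Fin m))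
    (f : Fin m → A × B) (hcard : S.card = k) (hmem : ∀ i ∈ S, f i ∈ M i)
    (h1 : ∀ i ∈ S, ∀ i' ∈ S, (f i).1 = (f i').1 → i = i')
    (h2 : ∀ i ∈ S, ∀ i' ∈ S, (f i).2 = (f i').2 → i = i')
    (G : Fin m) (e : A × B) (hG : G ∉ S) (he : e ∈ M G)
    (he1 : ∀ i ∈ S, e.1 ≠ (f i).1) (he2 : ∀ i ∈ S, e.2 ≠ (f i).2) :
    RB M (k + 1) := by
  have hfu : ∀ i ∈ S, Function.update f G e i = f i := by
    intro i hi
    exact Function.update_of_ne (by rintro rfl; exact hG hi) _ _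
  refine ⟨insert G S, Function.update f G e, ?_, ?_, ?_, ?_⟩
  · rw [Finset.card_insert_of_notMem hG, hcard]
  · intro i hi
    rcases Finset.mem_insert.1 hi with rfl | hi
    · simpa using he
    · rw [hfu i hi]; exact hmem i hi
  · intro i hi i' hi' hh
    rcases Finset.mem_insert.1 hi with h | hS
    · rcases Finset.mem_insert.1 hi' with h' | hS'
      · rw [h, h']
      · subst h
        rw [Function.update_self, hfu i' hS'] at hh
        exact absurd hh (he1 i' hS')
    · rcases Finset.mem_insert.1 hi' with h' | hS'
      · subst h'
        rw [Function.update_self, hfu i hS] at hh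
        exact absurd hh.symm (he1 i hS)
      · rw [hfu i hS, hfu i' hS'] at hh
        exact h1 i hS i' hS' hh
  · intro i hi i' hi' hh
    rcases Finset.mem_insert.1 hi with h | hS
    · rcases Finset.mem_insert.1 hi' with h' | hS'
      · rw [h, h']
      · subst h
        rw [Function.update_self, hfu i' hS'] at hh
        exact absurd hh (he2 i' hS')
    · rcases Finset.mem_insert.1 hi' with h' | hS'
      · subst h'
        rw [Function.update_self, hfu i hS] at hh
        exact absurd hh.symm (he2 i hS)
      · rw [hfu i hS, hfu i' hS'] at hh
        exact h2 i hS i' hS' hh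

/-- The key rotation lemma: given a rainbow matching of size `k` and an alternating
chain structure of length `j`, plus a fresh edge whose second coordinate is free, we
can produce a rainbow matching of size `k+1`. -/
lemma rot {m k : ℕ} (M : Fin m → Finset (A × B)) :
    ∀ j : ℕ, ∀ (S : Finset (Fin m)) (f : Fin m → A × B),
    S.card = k → (∀ i ∈ S, f i ∈ M i) →
    (∀ i ∈ S, ∀ i' ∈ S, (f i).1 = (f i').1 → i = i') →
    (∀ i ∈ S, ∀ i' ∈ S, (f i).2 = (f i').2 → i = i') →
    ∀ (t G : Fin j → Fin m) (g : Fin j → A × B),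
    Function.Injective t → (∀ l, t l ∈ S) →
    Function.Injective G → (∀ l, G l ∉ S) →
    (∀ l, g l ∈ M (G l)) → (∀ l, (g l).2 = (f (t l)).2) →
    (∀ l : Fin j, ∀ i ∈ S, (g l).1 = (f i).1 → ∃ l' : Fin j, (l' : ℕ) < (l : ℕ) ∧ i = t l') →
    ∀ (Gs : Fin m) (e : A × B), Gs ∉ S → (∀ l, Gs ≠ G l) → e ∈ M Gs →
    (∀ i ∈ S, e.2 ≠ (f i).2) →
    (∀ i ∈ S, e.1 = (f i).1 → ∃ l, i = t l) →
    RB M (k + 1) := by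
  intro j
  induction j using Nat.strong_induction_on with
  | _ j IH =>
  intro S f hcard hmem h1 h2 t G g tinj tmem Ginj Gnot gmem g2 ggood Gs e hGs hGsG he he2 he1
  by_cases hx : ∃ i ∈ S, e.1 = (f i).1
  · obtain ⟨i₀, hi₀S, hi₀⟩ := hx
    obtain ⟨l₀, hl₀⟩ := he1 i₀ hi₀S hi₀
    -- the new base rainbow matching of size `k`
    set S' : Finset (Fin m) := insert Gs (S.erase i₀) with hS'
    set f' : Fin m → A × B := Function.update f Gs e with hf'
    have hGse : i₀ ≠ Gs := by rintro rfl; exact hGs hi₀S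
    have hfu : ∀ i ∈ S, f' i = f i := by
      intro i hi
      exact Function.update_of_ne (by rintro rfl; exact hGs hi) _ _
    have hfGs : f' Gs = e := Function.update_self _ _ _
    have hmem' : ∀ i ∈ S', i = Gs ∨ (i ∈ S ∧ i ≠ i₀) := by
      intro i hi
      rcases Finset.mem_insert.1 hi with h | h
      · exact Or.inl h
      · exact Or.inr ⟨Finset.mem_of_mem_erase h, Finset.ne_of_mem_erase h⟩
    have hmem'' : ∀ i ∈ S, i ≠ i₀ → i ∈ S' :=
      fun i hi hne => Finset.mem_insert_of_mem (Finset.mem_erase.2 ⟨hne, hi⟩)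
    have hGsS' : Gs ∈ S' := Finset.mem_insert_self _ _
    -- the truncation map
    have hcast : ∀ l : Fin (l₀ : ℕ), (l : ℕ) < j := fun l => lt_trans l.2 l₀.2
    set c : Fin (l₀ : ℕ) → Fin j := fun l => ⟨l.1, hcast l⟩ with hc
    have hcne : ∀ l : Fin (l₀ : ℕ), c l ≠ l₀ := by
      intro l h
      have : (l : ℕ) = (l₀ : ℕ) := congrArg Fin.val h
      omega
    refine IH l₀.1 l₀.2 S' f' ?_ ?_ ?_ ?_ (fun l => t (c l)) (fun l => G (c l)) (fun l => g (c l))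
      ?_ ?_ ?_ ?_ ?_ ?_ ?_ (G l₀) (g l₀) ?_ ?_ (gmem l₀) ?_ ?_
    -- S'.card = k
    · have hk : 1 ≤ k := hcard ▸ Finset.card_pos.2 ⟨i₀, hi₀S⟩
      rw [Finset.card_insert_of_notMem (fun h => hGs (Finset.mem_of_mem_erase h)),
        Finset.card_erase_of_mem hi₀S, hcard]
      omega
    -- membership of edges
    · intro i hi
      rcases hmem' i hi with rfl | ⟨hiS, _⟩
      · rw [hfGs]; exact he
      · rw [hfu i hiS]; exact hmem i hiS
    -- first coordinates injective
    · intro i hi i' hi' hh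
      rcases hmem' i hi with h | ⟨hiS, hine⟩
      · rcases hmem' i' hi' with h' | ⟨hiS', hine'⟩
        · rw [h, h']
        · subst h
          rw [hfGs, hfu i' hiS'] at hh
          exact absurd (h1 i₀ hi₀S i' hiS' (hi₀.symm.trans hh)).symm hine'
      · rcases hmem' i' hi' with h' | ⟨hiS', hine'⟩
        · subst h'
          rw [hfGs, hfu i hiS] at hh
          exact absurd (h1 i₀ hi₀S i hiS (hi₀.symm.trans hh.symm)).symm hine
        · rw [hfu i hiS, hfu i' hiS'] at hh
          exact h1 i hiS i' hiS' hh
    -- second coordinates injective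
    · intro i hi i' hi' hh
      rcases hmem' i hi with h | ⟨hiS, hine⟩
      · rcases hmem' i' hi' with h' | ⟨hiS', hine'⟩
        · rw [h, h']
        · subst h
          rw [hfGs, hfu i' hiS'] at hh
          exact absurd hh (he2 i' hiS')
      · rcases hmem' i' hi' with h' | ⟨hiS', hine'⟩
        · subst h'
          rw [hfGs, hfu i hiS] at hh
          exact absurd hh.symm (he2 i hiS)
        · rw [hfu i hiS, hfu i' hiS'] at hh
          exact h2 i hiS i' hiS' hh
    -- t' injective
    · intro l l' hll
      have hv : (c l).1 = (c l').1 := congrArg Fin.val (tinj hll)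
      exact Fin.ext hv
    -- t' lands in S'
    · intro l
      refine hmem'' (t (c l)) (tmem (c l)) ?_
      intro h
      exact hcne l (tinj (h.trans hl₀))
    -- G' injective
    · intro l l' hll
      have hv : (c l).1 = (c l').1 := congrArg Fin.val (Ginj hll)
      exact Fin.ext hv
    -- G' avoids S'
    · intro l hl
      rcases hmem' _ hl with h | ⟨hiS, _⟩
      · exact hGsG (c l) h.symm
      · exact Gnot (c l) hiS
    -- g' in the right matchings
    · intro l; exact gmem (c l)
    -- second coordinates of chain edges
    · intro l
      have ht : t (c l) ∈ S := tmem (c l)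
      rw [hfu _ ht]
      exact g2 (c l)
    -- goodness of chain edges
    · intro l i hi hh
      rcases hmem' i hi with h | ⟨hiS, hine⟩
      · subst h
        rw [hfGs] at hh
        obtain ⟨l', hl', hl''⟩ := ggood (c l) i₀ hi₀S (hh.trans hi₀)
        have : l' = l₀ := tinj (hl''.symm.trans hl₀)
        subst this
        exact absurd (lt_trans hl' l.2) (lt_irrefl _)
      · rw [hfu i hiS] at hh
        obtain ⟨l', hl', hl''⟩ := ggood (c l) i hiS hh
        exact ⟨⟨l'.1, lt_trans hl' l.2⟩, hl', hl''⟩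
    -- G l₀ not in S'
    · intro hl
      rcases hmem' _ hl with h | ⟨hiS, _⟩
      · exact hGsG l₀ h.symm
      · exact Gnot l₀ hiS
    -- G l₀ differs from the truncated G's
    · intro l h
      exact hcne l (Ginj h.symm)
    -- second coordinate of g l₀ is free in the new matching
    · intro i hi hh
      rcases hmem' i hi with h | ⟨hiS, hine⟩
      · subst h
        rw [hfGs] at hh
        exact he2 i₀ hi₀S (hh.symm.trans ((g2 l₀).trans (congrArg (fun x => (f x).2) hl₀.symm)))
      · rw [hfu i hiS] at hh
        have : (f (t l₀)).2 = (f i).2 := (g2 l₀).symm.trans hh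
        rw [← hl₀] at this
        exact hine (h2 i hiS i₀ hi₀S this.symm)
    -- first coordinate of g l₀ only meets earlier chain vertices
    · intro i hi hh
      rcases hmem' i hi with h | ⟨hiS, hine⟩
      · subst h
        rw [hfGs] at hh
        obtain ⟨l', hl', hl''⟩ := ggood l₀ i₀ hi₀S (hh.trans hi₀)
        have : l' = l₀ := tinj (hl''.symm.trans hl₀)
        subst this
        exact absurd hl' (lt_irrefl _)
      · rw [hfu i hiS] at hh
        obtain ⟨l', hl', hl''⟩ := ggood l₀ i hiS hh
        exact ⟨⟨l'.1, hl'⟩, hl''⟩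
  · push_neg at hx
    exact RB_insert M S f hcard hmem h1 h2 Gs e hGs he hx he2


/-- An alternating chain structure of length `j` relative to a rainbow matching `(S, f)`. -/
def Chain {m : ℕ} (M : Fin m → Finset (A × B)) (S : Finset (Fin m)) (f : Fin m → A × B)
    (j : ℕ) : Prop :=
  ∃ t G : Fin j → Fin m, ∃ g : Fin j → A × B,
    Function.Injective t ∧ (∀ l, t l ∈ S) ∧ Function.Injective G ∧ (∀ l, G l ∉ S) ∧
    (∀ l, g l ∈ M (G l)) ∧ (∀ l, (g l).2 = (f (t l)).2) ∧
    (∀ l : Fin j, ∀ i ∈ S, (g l).1 = (f i).1 → ∃ l' : Fin j, (l' : ℕ) < (l : ℕ) ∧ i = t l')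

lemma chain_step {m n k j : ℕ} (M : Fin m → Finset (A × B))
    (hmatch : ∀ i, IsMatching (M i)) (hsize : ∀ i, n ≤ (M i).card)
    (hkn : k + 1 ≤ n) (hm : 2 * k + 1 ≤ m)
    (S : Finset (Fin m)) (f : Fin m → A × B)
    (hcard : S.card = k) (hmem : ∀ i ∈ S, f i ∈ M i)
    (h1 : ∀ i ∈ S, ∀ i' ∈ S, (f i).1 = (f i').1 → i = i')
    (h2 : ∀ i ∈ S, ∀ i' ∈ S, (f i).2 = (f i').2 → i = i')
    (hno : ¬ RB M (k + 1)) (hj : j ≤ k) (hch : Chain M S f j) :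
    Chain M S f (j + 1) := by
  obtain ⟨t, G, g, tinj, tmem, Ginj, Gnot, gmem, g2, ggood⟩ := hch
  have hm0 : 0 < m := by omega
  -- find a fresh unused matching index
  have hfresh : ∃ Gs : Fin m, Gs ∉ S ∧ ∀ l, Gs ≠ G l := by
    by_contra hcon
    push_neg at hcon
    have hsub : Finset.univ ⊆ S ∪ Finset.image G Finset.univ := by
      intro x _
      rcases Classical.em (x ∈ S) with h | h
      · exact Finset.mem_union_left _ h
      · obtain ⟨l, hl⟩ := hcon x h
        exact Finset.mem_union_right _ (Finset.mem_image.2 ⟨l, Finset.mem_univ _, hl.symm⟩)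
    have := Finset.card_le_card hsub
    have h3 := Finset.card_union_le S (Finset.image G Finset.univ)
    have h4 : (Finset.image G Finset.univ).card ≤ j := by
      simpa using Finset.card_image_le (s := (Finset.univ : Finset (Fin j))) (f := G)
    simp only [Finset.card_univ, Fintype.card_fin] at this
    omega
  obtain ⟨Gs, hGs, hGsG⟩ := hfresh
  -- counting: find a suitable edge in `M Gs`
  set P₁ : A × B → Prop := fun e => ∃ i ∈ S, e.1 = (f i).1 ∧ ∀ l, i ≠ t l with hP₁def
  set P₂ : A × B → Prop := fun e => ∃ l, e.2 = (f (t l)).2 with hP₂def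
  have hedge : ∃ e ∈ M Gs, ¬ P₁ e ∧ ¬ P₂ e := by
    by_contra hcon
    push_neg at hcon
    classical
    set N₁ := (M Gs).filter P₁ with hN₁
    set N₂ := (M Gs).filter P₂ with hN₂
    have hsub : M Gs ⊆ N₁ ∪ N₂ := by
      intro e he
      rcases Classical.em (P₁ e) with h | h
      · exact Finset.mem_union_left _ (Finset.mem_filter.2 ⟨he, h⟩)
      · exact Finset.mem_union_right _ (Finset.mem_filter.2 ⟨he, hcon e he h⟩)
    have himt : Finset.image t Finset.univ ⊆ S := by
      intro x hx
      obtain ⟨l, _, hl⟩ := Finset.mem_image.1 hx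
      exact hl ▸ tmem l
    have hjcard : (Finset.image t Finset.univ).card = j := by
      rw [Finset.card_image_of_injective _ tinj, Finset.card_univ, Fintype.card_fin]
    have hb₁ : N₁.card ≤ k - j := by
      have := Finset.card_le_card_of_injOn
        (f := fun e => if h : P₁ e then h.choose else (⟨0, hm0⟩ : Fin m))
        (s := N₁) (t := S \ Finset.image t Finset.univ) ?_ ?_
      · rwa [Finset.card_sdiff_of_subset himt, hcard, hjcard] at this
      · intro e he
        have hP : P₁ e := (Finset.mem_filter.1 he).2
        simp only [dif_pos hP]
        obtain ⟨hiS, _, hnt⟩ := hP.choose_spec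
        refine Finset.mem_sdiff.2 ⟨hiS, ?_⟩
        intro hmem2
        obtain ⟨l, _, hl⟩ := Finset.mem_image.1 hmem2
        exact hnt l hl.symm
      · intro e he e2 he2 hee
        have hP : P₁ e := (Finset.mem_filter.1 he).2
        have hP2 : P₁ e2 := (Finset.mem_filter.1 he2).2
        simp only [dif_pos hP, dif_pos hP2] at hee
        obtain ⟨_, hc1, _⟩ := hP.choose_spec
        obtain ⟨_, hc2, _⟩ := hP2.choose_spec
        exact (hmatch Gs).1 e (Finset.mem_filter.1 he).1 e2 (Finset.mem_filter.1 he2).1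
          (hc1.trans (by rw [hee, ← hc2]))
    have hb₂ : N₂.card ≤ j := by
      have := Finset.card_le_card_of_injOn
        (f := fun e => if h : P₂ e then t h.choose else (⟨0, hm0⟩ : Fin m))
        (s := N₂) (t := Finset.image t Finset.univ) ?_ ?_
      · rwa [hjcard] at this
      · intro e he
        have hP : P₂ e := (Finset.mem_filter.1 he).2
        simp only [dif_pos hP]
        exact Finset.mem_image.2 ⟨hP.choose, Finset.mem_univ _, rfl⟩
      · intro e he e2 he2 hee
        have hP : P₂ e := (Finset.mem_filter.1 he).2
        have hP2 : P₂ e2 := (Finset.mem_filter.1 he2).2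
        simp only [dif_pos hP, dif_pos hP2] at hee
        have hl := tinj hee
        have hs1 := hP.choose_spec
        have hs2 := hP2.choose_spec
        exact (hmatch Gs).2 e (Finset.mem_filter.1 he).1 e2 (Finset.mem_filter.1 he2).1
          (hs1.trans (by rw [hl, ← hs2]))
    have hk1 : n ≤ (M Gs).card := hsize Gs
    have := (Finset.card_le_card hsub).trans (Finset.card_union_le _ _)
    omega
  obtain ⟨e, he, hnP₁, hnP₂⟩ := hedge
  simp only [hP₁def] at hnP₁
  simp only [hP₂def] at hnP₂
  push_neg at hnP₁ hnP₂
  have he1 : ∀ i ∈ S, e.1 = (f i).1 → ∃ l, i = t l := by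
    intro i hi hh
    obtain ⟨l, hl⟩ := hnP₁ i hi hh
    exact ⟨l, not_not.1 (by simpa using hl)⟩
  by_cases hy : ∃ i ∈ S, e.2 = (f i).2
  · -- extend the chain
    obtain ⟨i₁, hi₁S, hi₁⟩ := hy
    have hi₁t : ∀ l, i₁ ≠ t l := by
      intro l hl
      exact hnP₂ l (hi₁.trans (congrArg (fun x => (f x).2) hl))
    refine ⟨Fin.snoc t i₁, Fin.snoc G Gs, Fin.snoc g e, ?_, ?_, ?_, ?_, ?_, ?_, ?_⟩
    · intro a b hab
      rcases Fin.eq_castSucc_or_eq_last a with ⟨a2, rfl⟩ | rfl <;>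
        rcases Fin.eq_castSucc_or_eq_last b with ⟨b2, rfl⟩ | rfl
      · simp only [Fin.snoc_castSucc] at hab
        exact congrArg Fin.castSucc (tinj hab)
      · simp only [Fin.snoc_castSucc, Fin.snoc_last] at hab
        exact absurd hab.symm (hi₁t a2)
      · simp only [Fin.snoc_castSucc, Fin.snoc_last] at hab
        exact absurd hab (hi₁t b2)
      · rfl
    · intro l
      rcases Fin.eq_castSucc_or_eq_last l with ⟨l2, rfl⟩ | rfl
      · simpa using tmem l2
      · simpa using hi₁S
    · intro a b hab
      rcases Fin.eq_castSucc_or_eq_last a with ⟨a2, rfl⟩ | rfl <;>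
        rcases Fin.eq_castSucc_or_eq_last b with ⟨b2, rfl⟩ | rfl
      · simp only [Fin.snoc_castSucc] at hab
        exact congrArg Fin.castSucc (Ginj hab)
      · simp only [Fin.snoc_castSucc, Fin.snoc_last] at hab
        exact absurd hab.symm (hGsG a2)
      · simp only [Fin.snoc_castSucc, Fin.snoc_last] at hab
        exact absurd hab (hGsG b2)
      · rfl
    · intro l
      rcases Fin.eq_castSucc_or_eq_last l with ⟨l2, rfl⟩ | rfl
      · simpa using Gnot l2
      · simpa using hGs
    · intro l
      rcases Fin.eq_castSucc_or_eq_last l with ⟨l2, rfl⟩ | rfl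
      · simpa using gmem l2
      · simpa using he
    · intro l
      rcases Fin.eq_castSucc_or_eq_last l with ⟨l2, rfl⟩ | rfl
      · simpa using g2 l2
      · simpa using hi₁
    · intro l i hi hh
      rcases Fin.eq_castSucc_or_eq_last l with ⟨l2, rfl⟩ | rfl
      · rw [Fin.snoc_castSucc] at hh
        obtain ⟨l3, hl3, hl4⟩ := ggood l2 i hi hh
        exact ⟨l3.castSucc, by simpa using hl3, by simpa using hl4⟩
      · rw [Fin.snoc_last] at hh
        obtain ⟨l3, hl3⟩ := he1 i hi hh
        refine ⟨l3.castSucc, ?_, by simpa using hl3⟩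
        simpa using l3.2
  · -- rotation: contradiction with `hno`
    push_neg at hy
    exact absurd (rot M j S f hcard hmem h1 h2 t G g tinj tmem Ginj Gnot gmem g2 ggood
      Gs e hGs hGsG he hy he1) hno

lemma drisko_s12 {m n : ℕ} (M : Fin m → Finset (A × B)) (hne : Nonempty (A × B))
    (hmatch : ∀ i, IsMatching (M i)) (hsize : ∀ i, n ≤ (M i).card) :
    ∀ k, k ≤ n → 2 * k ≤ m + 1 → RB M k := by
  intro k
  induction k with
  | zero =>
    intro _ _
    exact ⟨∅, fun _ => Classical.choice hne, by simp, by simp, by simp, by simp⟩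
  | succ k IH =>
    intro hkn hm
    obtain ⟨S, f, hcard, hmem, h1, h2⟩ := IH (by omega) (by omega)
    by_contra hno
    have key : ∀ j, j ≤ k + 1 → Chain M S f j := by
      intro j
      induction j with
      | zero =>
        intro _
        exact ⟨Fin.elim0, Fin.elim0, Fin.elim0, fun l => l.elim0, fun l => l.elim0,
          fun l => l.elim0, fun l => l.elim0, fun l => l.elim0, fun l => l.elim0,
          fun l => l.elim0⟩
      | succ j IHj =>
        intro hj
        exact chain_step M hmatch hsize hkn (by omega) S f hcard hmem h1 h2 hno
          (by omega) (IHj (by omega))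
    obtain ⟨t, G, g, tinj, tmem, _, _, _, _, _⟩ := key (k + 1) le_rfl
    have hsub : Finset.image t Finset.univ ⊆ S := by
      intro x hx
      obtain ⟨l, _, hl⟩ := Finset.mem_image.1 hx
      exact hl ▸ tmem l
    have := Finset.card_le_card hsub
    rw [Finset.card_image_of_injective _ tinj, Finset.card_univ, Fintype.card_fin, hcard] at this
    omega

end Drisko

/-- If `n > 1` and `M_1, …, M_{2n-2}` are matchings of size `n` in a bipartite graph
possessing no rainbow matching of size `n`, then there is a matching `F` of size `n`
representing at least `n - 1` of the matchings `M_i`: there are `n - 1` distinct edges of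
`F` and `n - 1` distinct indices such that each of these edges belongs to the matching with
the corresponding index. -/
theorem near_rainbow {A B : Type*} {n : ℕ} (hn : 1 < n)
    (M : Fin (2 * n - 2) → Finset (A × B))
    (hM : ∀ i, IsMatching (M i) ∧ (M i).card = n)
    (hno : ¬ HasRainbowMatching M n) :
    ∃ F : Finset (A × B), IsMatching F ∧ F.card = n ∧
      ∃ (e : Fin (n - 1) → A × B) (idx : Fin (n - 1) → Fin (2 * n - 2)),
        Function.Injective e ∧ Function.Injective idx ∧
        (∀ j, e j ∈ F) ∧ (∀ j, e j ∈ M (idx j)) := by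
  classical
  have hm0 : 0 < 2 * n - 2 := by omega
  set i₀ : Fin (2 * n - 2) := ⟨0, hm0⟩ with hi₀
  have hne : Nonempty (A × B) := by
    have h := (hM i₀).2
    obtain ⟨p, _⟩ := Finset.card_pos.1 (by omega : 0 < (M i₀).card)
    exact ⟨p⟩
  obtain ⟨S, f, hcard, hmem, h1, h2⟩ :=
    drisko_s12 M hne (fun i => (hM i).1) (fun i => le_of_eq (hM i).2.symm) (n - 1)
      (by omega) (by omega)
  -- find a fresh first coordinate
  have ha : ∃ p ∈ M i₀, ∀ i ∈ S, p.1 ≠ (f i).1 := by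
    by_contra hcon
    push_neg at hcon
    have := Finset.card_le_card_of_injOn
      (f := fun p => if h : ∃ i ∈ S, p.1 = (f i).1 then h.choose else i₀)
      (s := M i₀) (t := S) ?_ ?_
    · rw [(hM i₀).2, hcard] at this; omega
    · intro p hp
      obtain ⟨i, hiS, hieq⟩ := hcon p hp
      have hex : ∃ i ∈ S, p.1 = (f i).1 := ⟨i, hiS, hieq⟩
      simp only [dif_pos hex]
      exact hex.choose_spec.1
    · intro p hp p2 hp2 hee
      have hex : ∃ i ∈ S, p.1 = (f i).1 := by
        obtain ⟨i, hiS, hieq⟩ := hcon p hp; exact ⟨i, hiS, hieq⟩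
      have hex2 : ∃ i ∈ S, p2.1 = (f i).1 := by
        obtain ⟨i, hiS, hieq⟩ := hcon p2 hp2; exact ⟨i, hiS, hieq⟩
      simp only [dif_pos hex, dif_pos hex2] at hee
      have e1 := hex.choose_spec.2
      have e2 := hex2.choose_spec.2
      exact (hM i₀).1.1 p hp p2 hp2 (e1.trans (by rw [hee, ← e2]))
  -- find a fresh second coordinate
  have hb : ∃ q ∈ M i₀, ∀ i ∈ S, q.2 ≠ (f i).2 := by
    by_contra hcon
    push_neg at hcon
    have := Finset.card_le_card_of_injOn
      (f := fun p => if h : ∃ i ∈ S, p.2 = (f i).2 then h.choose else i₀)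
      (s := M i₀) (t := S) ?_ ?_
    · rw [(hM i₀).2, hcard] at this; omega
    · intro p hp
      obtain ⟨i, hiS, hieq⟩ := hcon p hp
      have hex : ∃ i ∈ S, p.2 = (f i).2 := ⟨i, hiS, hieq⟩
      simp only [dif_pos hex]
      exact hex.choose_spec.1
    · intro p hp p2 hp2 hee
      have hex : ∃ i ∈ S, p.2 = (f i).2 := by
        obtain ⟨i, hiS, hieq⟩ := hcon p hp; exact ⟨i, hiS, hieq⟩
      have hex2 : ∃ i ∈ S, p2.2 = (f i).2 := by
        obtain ⟨i, hiS, hieq⟩ := hcon p2 hp2; exact ⟨i, hiS, hieq⟩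
      simp only [dif_pos hex, dif_pos hex2] at hee
      have e1 := hex.choose_spec.2
      have e2 := hex2.choose_spec.2
      exact (hM i₀).1.2 p hp p2 hp2 (e1.trans (by rw [hee, ← e2]))
  obtain ⟨p, hpM, hp⟩ := ha
  obtain ⟨q, hqM, hq⟩ := hb
  set x : A × B := (p.1, q.2) with hx
  have hxnot : x ∉ S.image f := by
    intro hmem2
    obtain ⟨i, hiS, hieq⟩ := Finset.mem_image.1 hmem2
    have hh := congrArg Prod.fst hieq
    exact hp i hiS hh.symm
  have hfinj : Set.InjOn f (S : Set (Fin (2 * n - 2))) := by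
    intro i hi i2 hi2 hee
    exact h2 i hi i2 hi2 (congrArg Prod.snd hee)
  have himcard : (S.image f).card = n - 1 := by
    rw [Finset.card_image_of_injOn hfinj, hcard]
  refine ⟨insert x (S.image f), ⟨?_, ?_⟩, ?_, ?_⟩
  · -- first coordinates determine edges
    intro a ha2 b hb2 hab
    rcases Finset.mem_insert.1 ha2 with rfl | ha3
    · rcases Finset.mem_insert.1 hb2 with h | hb3
      · rw [h]
      · obtain ⟨i, hiS, rfl⟩ := Finset.mem_image.1 hb3
        exact absurd hab (hp i hiS)
    · rcases Finset.mem_insert.1 hb2 with h | hb3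
      · subst h
        obtain ⟨i, hiS, rfl⟩ := Finset.mem_image.1 ha3
        exact absurd hab.symm (hp i hiS)
      · obtain ⟨i, hiS, rfl⟩ := Finset.mem_image.1 ha3
        obtain ⟨i2, hiS2, rfl⟩ := Finset.mem_image.1 hb3
        rw [h1 i hiS i2 hiS2 hab]
  · -- second coordinates determine edges
    intro a ha2 b hb2 hab
    rcases Finset.mem_insert.1 ha2 with rfl | ha3
    · rcases Finset.mem_insert.1 hb2 with h | hb3
      · rw [h]
      · obtain ⟨i, hiS, rfl⟩ := Finset.mem_image.1 hb3
        exact absurd hab (hq i hiS)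
    · rcases Finset.mem_insert.1 hb2 with h | hb3
      · subst h
        obtain ⟨i, hiS, rfl⟩ := Finset.mem_image.1 ha3
        exact absurd hab.symm (hq i hiS)
      · obtain ⟨i, hiS, rfl⟩ := Finset.mem_image.1 ha3
        obtain ⟨i2, hiS2, rfl⟩ := Finset.mem_image.1 hb3
        rw [h2 i hiS i2 hiS2 hab]
  · rw [Finset.card_insert_of_notMem hxnot, himcard]
    omega
  · set σ := S.orderIsoOfFin hcard with hσ
    refine ⟨fun j => f (σ j), fun j => (σ j : Fin (2 * n - 2)), ?_, ?_, ?_, ?_⟩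
    · intro a b hab
      have h := h2 _ (σ a).2 _ (σ b).2 (congrArg Prod.snd hab)
      exact σ.injective (Subtype.ext h)
    · intro a b hab
      exact σ.injective (Subtype.ext hab)
    · intro j
      exact Finset.mem_insert_of_mem (Finset.mem_image.2 ⟨σ j, (σ j).2, rfl⟩)
    · intro j
      exact hmem _ (σ j).2
end

section
/- Let n ≥ 1 and let a, b ∈ ℤ/nℤ be such that b − a has additive order n (equivalently, gcd of the integer lift of b − a with n equals 1). Then the multiset consisting of n − 1 copies of a and n − 1 copies of b has no sub-multiset of size n whose elements sum to 0 in ℤ/nℤ. Equivalently: for all integers k, ℓ ≥ 0 with k + ℓ = n, k ≤ n − 1, and ℓ ≤ n − 1, one has k·a + ℓ·b ≠ 0 in ℤ/nℤ. -/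
/-- **Sharpness of the Erdős–Ginzburg–Ziv theorem.** If `n ≥ 1` and `a, b ∈ ℤ/nℤ` are such
that `b - a` has additive order `n`, then the multiset consisting of `n - 1` copies of `a`
and `n - 1` copies of `b` has no sub-multiset of size `n` summing to `0`. -/
theorem egz_sharp {n : ℕ} (hn : 1 ≤ n) (a b : ZMod n) (hab : addOrderOf (b - a) = n) :
    ¬ ∃ B : Multiset (ZMod n),
        B ≤ Multiset.replicate (n - 1) a + Multiset.replicate (n - 1) b ∧
        Multiset.card B = n ∧ B.sum = 0 := by
  rintro ⟨B, hle, hcard, hsum⟩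
  -- first rule out n = 1 / a = b
  rcases eq_or_ne a b with rfl | hab'
  · rw [sub_self, addOrderOf_zero] at hab
    subst hab
    simp only [Nat.sub_self, Multiset.replicate_zero, add_zero, Multiset.le_zero] at hle
    rw [hle] at hcard
    simp at hcard
  -- decompose B
  set k := B.count a with hk
  set l := B.count b with hl
  have hmem : ∀ x ∈ B, x = a ∨ x = b := by
    intro x hx
    have := Multiset.mem_of_le hle hx
    simp [Multiset.mem_replicate] at this
    tauto
  have hBeq : B = Multiset.replicate k a + Multiset.replicate l b := by
    ext x
    rw [Multiset.count_add, Multiset.count_replicate, Multiset.count_replicate]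
    rcases eq_or_ne a x with h1 | h1
    · subst h1
      rw [if_pos rfl, if_neg (Ne.symm hab'), add_zero]
    · rw [if_neg h1]
      rcases eq_or_ne b x with h2 | h2
      · subst h2
        rw [if_pos rfl, zero_add]
      · rw [if_neg h2, add_zero]
        exact Multiset.count_eq_zero_of_notMem fun hx => by
          rcases hmem x hx with h | h
          · exact h1 h.symm
          · exact h2 h.symm
  have hkle : k ≤ n - 1 := by
    have := Multiset.count_le_of_le a hle
    simpa [Multiset.count_replicate, Ne.symm hab'] using this
  have hlle : l ≤ n - 1 := by
    have := Multiset.count_le_of_le b hle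
    simpa [Multiset.count_replicate, hab'] using this
  have hkl : k + l = n := by
    have := hcard
    rw [hBeq] at this
    simpa using this
  have hsum' : (k : ZMod n) • a + (l : ZMod n) • b = 0 := by
    rw [hBeq] at hsum
    simpa [Multiset.sum_replicate, nsmul_eq_mul] using hsum
  -- k • a + l • b = k • a + (n - k) • b = n • b + k • (a - b) = k • (a-b)
  have hnz : ((n : ℕ) : ZMod n) = 0 := ZMod.natCast_self n
  have : (k : ZMod n) * (a - b) = 0 := by
    have hln : (l : ZMod n) = -(k : ZMod n) := by
      have : ((k + l : ℕ) : ZMod n) = 0 := by rw [hkl]; exact hnz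
      push_cast at this
      linear_combination this
    rw [smul_eq_mul, smul_eq_mul, hln] at hsum'
    ring_nf at hsum' ⊢
    linear_combination hsum'
  -- so addOrderOf (b - a) = n divides k
  have hdvd : n ∣ k := by
    have h0 : (k : ZMod n) • (b - a) = 0 := by
      rw [smul_eq_mul]
      have : (k : ZMod n) * (b - a) = -((k : ZMod n) * (a - b)) := by ring
      rw [this, ‹(k : ZMod n) * (a - b) = 0›, neg_zero]
    have h0' : k • (b - a) = 0 := by rw [nsmul_eq_mul]; exact h0
    have := addOrderOf_dvd_of_nsmul_eq_zero h0'
    rwa [hab] at this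
  have hkpos : 1 ≤ k := by omega
  have : n ≤ k := Nat.le_of_dvd hkpos hdvd
  omega
end
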